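/- arXiv:2510.22820 — 7 statements merged into one kernel-verified Lean document; each statement's English description precedes it below -/
import Mathlib

section
/- Let B = K[s_1,…,s_n]/I be a finite-dimensional monomial algebra, where I is an ideal generated by monomials. Then the subalgebra of End_K(B) generated by the restrictions of the partial derivative operators ∂/∂s_1,…,∂/∂s_n to B is isomorphic as a K-algebra to B itself, via the map sending s_i to ∂/∂s_i. -/
open MvPolynomial

/-!
Substituting the commuting operators `D i` into a polynomial gives an algebra map
`Ψ : K[s] → End_K(B)` whose image is the algebra generated by the `D i`; it remains to see that
its kernel is `I`. On the classes of the monomials `s^d ∉ I`, which span `B`, the operator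
`Ψ (s^a)` acts as `∂^a` does: `s^d ↦ (d)_a s^(d - a)` with the falling factorial
`(d)_a = ∏ i, d_i (d_i - 1) ⋯ (d_i - a_i + 1)`. If `s^a ∈ I` and `s^d ∉ I` then `a ≰ d`, so
`(d)_a = 0` and `Ψ` kills the generators of `I`. Conversely, if `Ψ p = 0` and `s^e ∉ I`, the
constant coefficient of `Ψ p (s^e)` is `e! · p_e`, and constant coefficients vanish on the proper
monomial ideal `I`; in characteristic zero this forces `p_e = 0`, so every monomial of `p` lies
in `I`.
-/

section MultiDescFactorial

variable {σ : Type*} [Fintype σ]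

/-- `∂^a (s^d) = multiDescFactorial d a • s^(d - a)`, where `∂^a = ∏ i, (∂/∂s_i)^(a i)`. -/
def multiDescFactorial (d a : σ →₀ ℕ) : ℕ := ∏ i, (d i).descFactorial (a i)

theorem multiDescFactorial_add (d a b : σ →₀ ℕ) :
    multiDescFactorial d (a + b) = multiDescFactorial (d - b) a * multiDescFactorial d b := by
  simp only [multiDescFactorial, ← Finset.prod_mul_distrib]
  refine Finset.prod_congr rfl fun i _ => ?_
  simpa using (Nat.descFactorial_mul_descFactorial (n := d i) (Nat.le_add_left (b i) (a i))).symm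

theorem multiDescFactorial_single_one (d : σ →₀ ℕ) (i : σ) :
    multiDescFactorial d (Finsupp.single i 1) = d i := by
  classical
  rw [multiDescFactorial, Finset.prod_eq_single i (fun j _ hj => by simp [hj]) (by simp)]
  simp

theorem multiDescFactorial_eq_zero {d a : σ →₀ ℕ} (h : ¬a ≤ d) : multiDescFactorial d a = 0 := by
  obtain ⟨i, hi⟩ : ∃ i, d i < a i := by simpa [Finsupp.le_def] using h
  exact Finset.prod_eq_zero (Finset.mem_univ i) (Nat.descFactorial_eq_zero_iff_lt.mpr hi)

theorem multiDescFactorial_self_ne_zero (d : σ →₀ ℕ) : multiDescFactorial d d ≠ 0 :=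
  Finset.prod_ne_zero_iff.mpr fun i _ => by simp

end MultiDescFactorial

namespace MvPolynomial

section MonomialIdeal

variable {σ R : Type*} [CommSemiring R] {I : Ideal (MvPolynomial σ R)}

theorem exists_eq_image_monomial {S : Set (MvPolynomial σ R)}
    (hS : ∀ p ∈ S, ∃ d : σ →₀ ℕ, p = monomial d 1) :
    ∃ A : Set (σ →₀ ℕ), S = (fun d => monomial d 1) '' A :=
  ⟨{d | monomial d 1 ∈ S}, Set.ext fun p =>
    ⟨fun hp => by obtain ⟨d, rfl⟩ := hS p hp; exact ⟨d, hp, rfl⟩, by rintro ⟨d, hd, rfl⟩; exact hd⟩⟩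

theorem monomial_mem_of_le {a d : σ →₀ ℕ} (ha : monomial a (1 : R) ∈ I) (hle : a ≤ d) :
    monomial d (1 : R) ∈ I := by
  simpa [monomial_mul, tsub_add_cancel_of_le hle] using I.mul_mem_left (monomial (d - a) 1) ha

theorem monomial_tsub_notMem {d : σ →₀ ℕ} (h : monomial d (1 : R) ∉ I) (e : σ →₀ ℕ) :
    monomial (d - e) (1 : R) ∉ I := fun hmem => h (monomial_mem_of_le hmem tsub_le_self)

theorem mem_of_monomial_mem {p : MvPolynomial σ R} (h : ∀ d ∈ p.support, monomial d 1 ∈ I) :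
    p ∈ I := by
  rw [p.as_sum]
  refine I.sum_mem fun d hd => ?_
  simpa [C_mul_monomial] using I.mul_mem_left (C (p.coeff d)) (h d hd)

theorem coeff_zero_eq_zero_of_mem_span_monomial {A : Set (σ →₀ ℕ)}
    (hI : I = Ideal.span ((fun d => monomial d 1) '' A)) (h1 : (1 : MvPolynomial σ R) ∉ I)
    {p : MvPolynomial σ R} (hp : p ∈ I) : p.coeff 0 = 0 := by
  by_contra h0
  subst hI
  obtain ⟨a, ha, ha0⟩ := mem_ideal_span_monomial_image.mp hp 0 (mem_support_iff.mpr h0)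
  obtain rfl : a = 0 := le_bot_iff.mp ha0
  exact h1 (Ideal.subset_span ⟨0, ha, by simp [monomial_zero']⟩)

end MonomialIdeal

theorem linearMap_ext_mk_monomial {σ R M : Type*} [CommRing R] [AddCommMonoid M] [Module R M]
    {I : Ideal (MvPolynomial σ R)} {f g : (MvPolynomial σ R ⧸ I) →ₗ[R] M}
    (h : ∀ d, monomial d (1 : R) ∉ I →
      f (Ideal.Quotient.mk I (monomial d 1)) = g (Ideal.Quotient.mk I (monomial d 1))) :
    f = g := by
  suffices f ∘ₗ (Ideal.Quotient.mkₐ R I).toLinearMap =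
      g ∘ₗ (Ideal.Quotient.mkₐ R I).toLinearMap from
    LinearMap.ext fun x => by
      obtain ⟨p, rfl⟩ := Ideal.Quotient.mk_surjective x
      exact LinearMap.congr_fun this p
  refine linearMap_ext fun d => LinearMap.ext_ring ?_
  by_cases hd : monomial d (1 : R) ∈ I
  · simp [Ideal.Quotient.eq_zero_iff_mem.mpr hd]
  · simpa using h d hd

end MvPolynomial

open scoped IsMulCommutative in
theorem exists_quotient_algEquiv_adjoin {σ R A : Type*} [CommRing R] [Ring A] [Algebra R A]
    (f : σ → A) (hf : ∀ i j, Commute (f i) (f j)) (J : Ideal (MvPolynomial σ R))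
    (hJ : ∀ Ψ : MvPolynomial σ R →ₐ[R] A, (∀ i, Ψ (X i) = f i) → RingHom.ker Ψ = J) :
    ∃ φ : (MvPolynomial σ R ⧸ J) ≃ₐ[R] Algebra.adjoin R (Set.range f),
      ∀ i, (φ (Ideal.Quotient.mk J (X i))).val = f i := by
  have := Algebra.isMulCommutative_adjoin R (s := Set.range f) <| by
    rintro _ ⟨i, rfl⟩ _ ⟨j, rfl⟩
    exact (hf i j).eq
  let Φ : MvPolynomial σ R →ₐ[R] Algebra.adjoin R (Set.range f) :=
    aeval fun i => ⟨f i, Algebra.subset_adjoin ⟨i, rfl⟩⟩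
  have hΦ (i : σ) : (Φ (X i)).val = f i := by simp [Φ]
  have hker : RingHom.ker Φ = J := by
    rw [← hJ ((Algebra.adjoin R _).val.comp Φ) hΦ]
    ext p
    simp only [RingHom.mem_ker, AlgHom.coe_comp, Function.comp_apply, Subalgebra.coe_val,
      ZeroMemClass.coe_eq_zero]
  have hsurj : Function.Surjective Φ := by
    rintro ⟨x, hx⟩
    obtain ⟨p, rfl⟩ := Algebra.adjoin_le (S := ((Algebra.adjoin R _).val.comp Φ).range)
      (Set.range_subset_iff.2 fun i => ⟨X i, hΦ i⟩) hx
    exact ⟨p, rfl⟩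
  exact ⟨(Ideal.quotientEquivAlgOfEq R hker.symm).trans
    (Ideal.quotientKerAlgEquivOfSurjective hsurj), hΦ⟩

section IteratedPDeriv

variable {σ R : Type*} [Fintype σ] [CommRing R] {I : Ideal (MvPolynomial σ R)}

def ActsAsIteratedPDeriv (I : Ideal (MvPolynomial σ R)) (f : Module.End R (MvPolynomial σ R ⧸ I))
    (a : σ →₀ ℕ) : Prop :=
  ∀ d, monomial d (1 : R) ∉ I →
    f (Ideal.Quotient.mk I (monomial d 1)) =
      (multiDescFactorial d a : R) • Ideal.Quotient.mk I (monomial (d - a) 1)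

namespace ActsAsIteratedPDeriv

section Operators

variable {f g : Module.End R (MvPolynomial σ R ⧸ I)} {a b : σ →₀ ℕ}

theorem one : ActsAsIteratedPDeriv I 1 0 := fun d _ => by simp [multiDescFactorial]

theorem mul (hf : ActsAsIteratedPDeriv I f a) (hg : ActsAsIteratedPDeriv I g b) :
    ActsAsIteratedPDeriv I (f * g) (a + b) := fun d hd => by
  rw [Module.End.mul_apply, hg d hd, map_smul, hf _ (monomial_tsub_notMem hd b), smul_smul,
    multiDescFactorial_add, tsub_tsub, add_comm b, Nat.cast_mul, mul_comm]

theorem ext (hf : ActsAsIteratedPDeriv I f a) (hg : ActsAsIteratedPDeriv I g a) : f = g :=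
  linearMap_ext_mk_monomial fun d hd => by rw [hf d hd, hg d hd]

theorem commute (hf : ActsAsIteratedPDeriv I f a) (hg : ActsAsIteratedPDeriv I g b) :
    Commute f g :=
  (hf.mul hg).ext (add_comm a b ▸ hg.mul hf)

theorem of_pderiv {i : σ}
    (hf : ∀ d, monomial d (1 : R) ∉ I →
      f (Ideal.Quotient.mk I (monomial d 1)) = Ideal.Quotient.mk I (pderiv i (monomial d 1))) :
    ActsAsIteratedPDeriv I f (Finsupp.single i 1) := fun d hd => by
  rw [hf d hd, pderiv_monomial, one_mul, multiDescFactorial_single_one,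
    ← Ideal.Quotient.mkₐ_eq_mk R, ← map_smul, smul_monomial, smul_eq_mul, mul_one]

end Operators

variable {D : σ → Module.End R (MvPolynomial σ R ⧸ I)}
  (hD : ∀ i, ActsAsIteratedPDeriv I (D i) (Finsupp.single i 1))
  {Ψ : MvPolynomial σ R →ₐ[R] Module.End R (MvPolynomial σ R ⧸ I)} (hΨ : ∀ i, Ψ (X i) = D i)
include hD hΨ

theorem algHom_monomial (a : σ →₀ ℕ) : ActsAsIteratedPDeriv I (Ψ (monomial a 1)) a := by
  have hmul (a b : σ →₀ ℕ) : Ψ (monomial (a + b) 1) = Ψ (monomial a 1) * Ψ (monomial b 1) := by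
    rw [← map_mul, monomial_mul, one_mul]
  induction a using Finsupp.induction_linear with
  | zero => simpa [monomial_zero'] using one
  | add a b ha hb => rw [hmul]; exact ha.mul hb
  | single i k =>
    induction k with
    | zero => simpa [monomial_zero'] using one
    | succ k ih => rw [Finsupp.single_add, hmul]; exact ih.mul ((hΨ i).symm ▸ hD i)

theorem algHom_apply_mk_monomial (p : MvPolynomial σ R) {e : σ →₀ ℕ}
    (he : monomial e (1 : R) ∉ I) :
    Ψ p (Ideal.Quotient.mk I (monomial e 1)) = Ideal.Quotient.mk I
      (∑ a ∈ p.support, monomial (e - a) (coeff a p * multiDescFactorial e a)) := by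
  conv_lhs => rw [p.as_sum]
  simp only [map_sum, LinearMap.sum_apply]
  refine Finset.sum_congr rfl fun a _ => ?_
  have hsmul (d : σ →₀ ℕ) (r : R) : monomial d r = r • monomial d 1 := by
    rw [smul_monomial, smul_eq_mul, mul_one]
  rw [hsmul a, map_smul, LinearMap.smul_apply, algHom_monomial hD hΨ a e he, smul_smul,
    hsmul (e - a) (_ * _), ← Ideal.Quotient.mkₐ_eq_mk R, map_smul]

theorem le_ker_algHom {A : Set (σ →₀ ℕ)} (hI : I = Ideal.span ((fun d => monomial d 1) '' A)) :
    I ≤ RingHom.ker Ψ := by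
  have hgen : (fun d => monomial d (1 : R)) '' A ⊆ I := hI ▸ Ideal.subset_span
  refine hI.le.trans (Ideal.span_le.mpr ?_)
  rintro _ ⟨a, ha, rfl⟩
  refine (algHom_monomial hD hΨ a).ext fun d hd => ?_
  rw [multiDescFactorial_eq_zero fun hle => hd (monomial_mem_of_le (hgen ⟨a, ha, rfl⟩) hle)]
  simp

theorem ker_algHom_le [IsDomain R] [CharZero R] {A : Set (σ →₀ ℕ)}
    (hI : I = Ideal.span ((fun d => monomial d 1) '' A)) : RingHom.ker Ψ ≤ I := by
  intro p hp
  refine mem_of_monomial_mem fun e he => ?_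
  by_contra heI
  set q := ∑ a ∈ p.support, monomial (e - a) (coeff a p * multiDescFactorial e a)
  have hq : q ∈ I := by
    rw [← Ideal.Quotient.eq_zero_iff_mem, ← algHom_apply_mk_monomial hD hΨ p heI,
      (RingHom.mem_ker).mp hp, LinearMap.zero_apply]
  -- only `a = e` contributes: `e - a = 0` means `e ≤ a`, and `(e)_a = 0` unless `a ≤ e`
  have hq0 : coeff 0 q = coeff e p * multiDescFactorial e e := by
    classical
    rw [coeff_sum, Finset.sum_eq_single e (fun a _ hae => ?_) (fun h => absurd he h), tsub_self,
      coeff_monomial, if_pos rfl]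
    rw [coeff_monomial, ite_eq_right_iff]
    intro hea
    rw [multiDescFactorial_eq_zero fun hae' => hae (le_antisymm hae' (tsub_eq_zero_iff_le.mp hea)),
      Nat.cast_zero, mul_zero]
  have h1 : (1 : MvPolynomial σ R) ∉ I := by
    simpa [monomial_zero'] using monomial_tsub_notMem heI e
  refine mul_ne_zero (mem_support_iff.mp he)
    (Nat.cast_ne_zero.mpr (multiDescFactorial_self_ne_zero e)) ?_
  rw [← hq0, coeff_zero_eq_zero_of_mem_span_monomial hI h1 hq]

theorem ker_algHom [IsDomain R] [CharZero R] {A : Set (σ →₀ ℕ)}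
    (hI : I = Ideal.span ((fun d => monomial d 1) '' A)) : RingHom.ker Ψ = I :=
  le_antisymm (ker_algHom_le hD hΨ hI) (le_ker_algHom hD hΨ hI)

end ActsAsIteratedPDeriv

end IteratedPDeriv

theorem stmt_2_general (K : Type*) [Field K] [CharZero K] (n : ℕ)
    (I : Ideal (MvPolynomial (Fin n) K))
    (hmono : ∃ S : Set (MvPolynomial (Fin n) K), I = Ideal.span S ∧
      ∀ p ∈ S, ∃ d : Fin n →₀ ℕ, p = monomial d 1)
    (D : Fin n → Module.End K (MvPolynomial (Fin n) K ⧸ I))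
    (hD : ∀ (i : Fin n) (d : Fin n →₀ ℕ), monomial d (1 : K) ∉ I →
      D i (Ideal.Quotient.mk I (monomial d 1)) =
        Ideal.Quotient.mk I (pderiv i (monomial d 1))) :
    ∃ φ : (MvPolynomial (Fin n) K ⧸ I) ≃ₐ[K] Algebra.adjoin K (Set.range D),
      ∀ i : Fin n,
        (φ (Ideal.Quotient.mk I (X i))).val = D i := by
  obtain ⟨S, hIS, hS⟩ := hmono
  obtain ⟨A, rfl⟩ := exists_eq_image_monomial hS
  have hD' (i : Fin n) := ActsAsIteratedPDeriv.of_pderiv (hD i)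
  exact exists_quotient_algEquiv_adjoin D (fun i j => (hD' i).commute (hD' j)) I
    fun Ψ hΨ => ActsAsIteratedPDeriv.ker_algHom hD' hΨ hIS

/-- For a finite-dimensional monomial algebra `B = K[s_1,…,s_n]/I`, the subalgebra of `End_K(B)`
generated by the (descended) partial derivative operators is isomorphic to `B` via `s_i ↦ ∂/∂s_i`. -/
theorem stmt_2 (K : Type*) [Field K] [CharZero K] (n : ℕ)
    (I : Ideal (MvPolynomial (Fin n) K))
    (hmono : ∃ S : Set (MvPolynomial (Fin n) K), I = Ideal.span S ∧
      ∀ p ∈ S, ∃ d : Fin n →₀ ℕ, p = monomial d 1)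
    (hfd : FiniteDimensional K (MvPolynomial (Fin n) K ⧸ I))
    (D : Fin n → Module.End K (MvPolynomial (Fin n) K ⧸ I))
    (hD : ∀ (i : Fin n) (d : Fin n →₀ ℕ), monomial d (1 : K) ∉ I →
      D i (Ideal.Quotient.mk I (monomial d 1)) =
        Ideal.Quotient.mk I (pderiv i (monomial d 1))) :
    ∃ φ : (MvPolynomial (Fin n) K ⧸ I) ≃ₐ[K] Algebra.adjoin K (Set.range D),
      ∀ i : Fin n,
        (φ (Ideal.Quotient.mk I (X i))).val = D i :=
  stmt_2_general K n I hmono D hD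
end

section
/- Let A and B be derivations (or more generally elements of an associative K-algebra, char K = 0) such that [A,B] = C and [A,C] = [B,C] = 0. Then for all n ≥ 0, (A+B)^n = Σ_{k=0, k ≡ n mod 2}^{n} (−C/2)^{(n−k)/2} · n!/(k! ((n−k)/2)!) · (Σ_{r=0}^{k} C(k,r) A^r B^{k−r}). -/
set_option linter.unusedSectionVars false
set_option linter.unusedVariables false

section
variable {K R : Type*} [Field K] [CharZero K] [Ring R] [Algebra K R]
variable (A B C : R)

/-- the inner binomial sum -/
noncomputable def Sk (K : Type*) [Field K] {R : Type*} [Ring R] [Algebra K R]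
    (A B : R) (k : ℕ) : R :=
  ∑ r ∈ Finset.range (k + 1), (k.choose r : K) • (A ^ r * B ^ (k - r))

lemma BA_pow (h1 : A * B - B * A = C) (h2 : A * C = C * A) (r : ℕ) :
    B * A ^ (r + 1) = A ^ (r + 1) * B - ((r : K) + 1) • (A ^ r * C) := by
  have e1 : B * A = A * B - C := by rw [← h1]; abel
  induction r with
  | zero =>
      simp only [pow_one, pow_zero, one_mul, Nat.cast_zero, zero_add, one_smul, e1]
  | succ r ih =>
      calc B * A ^ (r + 2) = (B * A ^ (r + 1)) * A := by rw [mul_assoc, ← pow_succ]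
        _ = (A ^ (r+1) * B - ((r:K)+1) • (A ^ r * C)) * A := by rw [ih]
        _ = A ^ (r+1) * (B * A) - ((r:K)+1) • (A ^ r * (C * A)) := by
              rw [sub_mul, smul_mul_assoc, mul_assoc, mul_assoc]
        _ = A ^ (r+2) * B - A ^ (r+1) * C - ((r:K)+1) • (A ^ (r+1) * C) := by
              rw [e1, ← h2, mul_sub, ← mul_assoc, ← pow_succ, ← mul_assoc, ← pow_succ]
        _ = A ^ (r+2) * B - (((r+1:ℕ):K) + 1) • (A ^ (r+1) * C) := by
              push_cast
              have : A ^ (r+1) * C = (1:K) • (A ^ (r+1) * C) := (one_smul K _).symm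
              rw [this]
              module

end

section
set_option linter.unusedSectionVars false
variable {K R : Type*} [Field K] [CharZero K] [Ring R] [Algebra K R]
variable (A B C : R)

lemma term_helper (h1 : A * B - B * A = C) (h2 : A * C = C * A) (h3 : B * C = C * B)
    (r j : ℕ) :
    B * (A ^ (r+1) * B ^ j) = A ^ (r+1) * B ^ (j+1) - ((r:K)+1) • (C * (A ^ r * B ^ j)) := by
  have hCA : C * A ^ r = A ^ r * C := ((show Commute C A from h2.symm).pow_right r).eq
  rw [← mul_assoc, BA_pow (K := K) A B C h1 h2, sub_mul, smul_mul_assoc, mul_assoc, ← pow_succ',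
    ← hCA, mul_assoc]

lemma key_step (h1 : A * B - B * A = C) (h2 : A * C = C * A) (h3 : B * C = C * B) (k : ℕ) :
    (A + B) * Sk K A B k = Sk K A B (k+1) - (k : K) • (C * Sk K A B (k-1)) := by
  match k with
  | 0 =>
    have e0 : Sk K A B 0 = 1 := by simp [Sk]
    have e1 : Sk K A B 1 = B + A := by
      simp [Sk, Finset.sum_range_succ]
    rw [Nat.cast_zero, zero_smul, sub_zero, e0, e1, mul_one]
    abel
  | (k+1) =>
    have hA : A * Sk K A B (k+1)
        = ∑ r ∈ Finset.range (k+2), (((k+1).choose r : K)) • (A^(r+1) * B^(k+1-r)) := by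
      unfold Sk
      rw [Finset.mul_sum]
      refine Finset.sum_congr rfl fun r hr => ?_
      rw [mul_smul_comm, ← mul_assoc, ← pow_succ']
    have hB : B * Sk K A B (k+1)
        = (∑ r ∈ Finset.range (k+1), (((k+1).choose (r+1) : K)) • (A^(r+1) * B^(k+1-r)))
          + B^(k+2) - ((k+1 : ℕ) : K) •
            (C * ∑ r ∈ Finset.range (k+1), (k.choose r : K) • (A ^ r * B ^ (k - r))) := by
      unfold Sk
      rw [Finset.mul_sum, Finset.sum_range_succ']
      have h0 : B * (((k+1).choose 0 : K) • (A ^ 0 * B ^ (k+1-0))) = B ^ (k+2) := by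
        simp [pow_succ']
      rw [h0]
      have hterm : ∀ r ∈ Finset.range (k+1),
          B * (((k+1).choose (r+1) : K) • (A ^ (r+1) * B ^ (k+1-(r+1))))
          = ((k+1).choose (r+1) : K) • (A^(r+1) * B^(k+1-r))
            - (((k+1 : ℕ):K) * (k.choose r : K)) • (C * (A^r * B^(k-r))) := by
        intro r hr
        have hr' : r < k + 1 := Finset.mem_range.mp hr
        have hsub : k + 1 - (r+1) = k - r := by omega
        have hsub2 : k - r + 1 = k + 1 - r := by omega
        have hcoef : ((k+1).choose (r+1) : K) * ((r:K)+1)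
            = ((k+1 : ℕ):K) * (k.choose r : K) := by
          have h : ((k+1).choose (r+1)) * (r+1) = (k+1) * k.choose r :=
            (Nat.add_one_mul_choose_eq k r).symm
          have h2 : (((k+1).choose (r+1) * (r+1) : ℕ) : K)
              = (((k+1) * k.choose r : ℕ) : K) := by rw [h]
          push_cast at h2 ⊢
          linear_combination h2
        rw [hsub, mul_smul_comm, term_helper (K := K) A B C h1 h2 h3 r (k-r), hsub2, smul_sub,
          smul_smul, hcoef]
      rw [Finset.sum_congr rfl hterm, Finset.sum_sub_distrib]
      have hCsum : ∑ r ∈ Finset.range (k+1),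
          (((k+1 : ℕ):K) * (k.choose r : K)) • (C * (A^r * B^(k-r)))
          = ((k+1 : ℕ) : K) •
            (C * ∑ r ∈ Finset.range (k+1), (k.choose r : K) • (A ^ r * B ^ (k - r))) := by
        rw [Finset.mul_sum, Finset.smul_sum]
        refine Finset.sum_congr rfl fun r hr => ?_
        rw [mul_smul_comm, smul_smul]
      rw [hCsum]
      abel
    have hS2 : Sk K A B (k+2)
        = (∑ r ∈ Finset.range (k+2), (((k+1).choose r : K)) • (A^(r+1) * B^(k+1-r)))
          + (∑ r ∈ Finset.range (k+1), (((k+1).choose (r+1) : K)) • (A^(r+1) * B^(k+1-r)))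
          + B^(k+2) := by
      unfold Sk
      rw [Finset.sum_range_succ']
      have h0 : (((k+2).choose 0 : ℕ) : K) • (A ^ 0 * B ^ (k+2-0)) = B ^ (k+2) := by simp
      rw [h0]
      congr 1
      have hterm : ∀ r ∈ Finset.range (k+2),
          (((k+2).choose (r+1) : ℕ) : K) • (A ^ (r+1) * B ^ (k+2-(r+1)))
          = ((k+1).choose r : K) • (A^(r+1) * B^(k+1-r))
            + ((k+1).choose (r+1) : K) • (A^(r+1) * B^(k+1-r)) := by
        intro r hr
        have hsub : k + 2 - (r+1) = k + 1 - r := by omega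
        rw [hsub, Nat.choose_succ_succ (k+1) r]
        push_cast
        rw [add_smul]
      rw [Finset.sum_congr rfl hterm, Finset.sum_add_distrib]
      congr 1
      rw [Finset.sum_range_succ, Nat.choose_succ_self]
      simp
    have hsub : k + 1 - 1 = k := by omega
    rw [add_mul, hA, hB, hS2, hsub]
    show _ = _ - ((k+1:ℕ) : K) • (C * Sk K A B k)
    unfold Sk
    abel
end


noncomputable def aco (K : Type*) [Field K] (n k : ℕ) : K :=
  if k % 2 = n % 2 then (n.factorial : K) / (k.factorial * ((n - k) / 2).factorial) else 0

lemma aco_rec (K : Type*) [Field K] [CharZero K] (n j : ℕ) (hj : j ≤ n + 1) :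
    aco K (n+1) j = (if j = 0 then 0 else aco K n (j-1))
      + (if j < n then ((2*(j+1) : ℕ) : K) * aco K n (j+1) else 0) := by
  have f0 : ∀ t : ℕ, ((t.factorial : ℕ) : K) ≠ 0 :=
    fun t => Nat.cast_ne_zero.mpr t.factorial_ne_zero
  by_cases hp : j % 2 = (n+1) % 2
  · -- parity matches n+1
    rcases Nat.eq_or_lt_of_le hj with hje | hjlt
    · -- j = n+1
      subst hje
      rw [aco, if_pos rfl, if_neg (by omega), if_neg (by omega), aco,
        if_pos (by omega), add_zero]
      rw [show n + 1 - (n + 1) = 0 by omega, show n + 1 - 1 = n by omega,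
        show (n - n) / 2 = 0 by omega]
      rw [Nat.factorial_zero]
      push_cast
      rw [mul_one, mul_one, div_self (f0 _), div_self (f0 _)]
    · -- j ≤ n, parity forces j < n
      have hjn : j < n := by omega
      obtain ⟨m, hm⟩ : ∃ m, n = j + 2 * m + 1 := ⟨(n - j - 1)/2, by omega⟩
      subst hm
      have hL : aco K (j + 2*m + 1 + 1) j
          = (((j + 2*m + 1 + 1).factorial : ℕ) : K) / (j.factorial * (m+1).factorial) := by
        rw [aco, if_pos (by omega), show (j + 2*m + 1 + 1 - j)/2 = m+1 by omega]
      have hR2 : aco K (j + 2*m + 1) (j+1)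
          = (((j + 2*m + 1).factorial : ℕ) : K) / ((j+1).factorial * m.factorial) := by
        rw [aco, if_pos (by omega), show (j + 2*m + 1 - (j+1))/2 = m by omega]
      rcases Nat.eq_zero_or_pos j with hj0 | hj1
      · subst hj0
        rw [hL, if_pos rfl, if_pos (by omega), hR2, zero_add,
          Nat.factorial_succ (2*m + 1), Nat.factorial_succ m]
        have hm1 : ((m:K)+1) ≠ 0 := Nat.cast_add_one_ne_zero m
        push_cast
        field_simp [f0 m, f0 (2*m+1), hm1]
        ring
      · obtain ⟨i, rfl⟩ : ∃ i, j = i + 1 := ⟨j - 1, by omega⟩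
        have hR1 : aco K (i + 1 + 2*m + 1) (i + 1 - 1)
            = (((i + 1 + 2*m + 1).factorial : ℕ) : K) / (i.factorial * (m+1).factorial) := by
          rw [show i + 1 - 1 = i by omega, aco, if_pos (by omega),
            show (i + 1 + 2*m + 1 - i)/2 = m+1 by omega]
        rw [hL, if_neg (by omega), if_pos (by omega), hR1, hR2,
          Nat.factorial_succ (i + 1 + 2*m + 1), Nat.factorial_succ (i+1),
          Nat.factorial_succ i, Nat.factorial_succ m]
        have hm1 : ((m:K)+1) ≠ 0 := Nat.cast_add_one_ne_zero m
        have hi1 : ((i:K)+1) ≠ 0 := Nat.cast_add_one_ne_zero i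
        have hi2 : ((i:K)+1+1) ≠ 0 := by
          have h := Nat.cast_add_one_ne_zero (R := K) (i+1)
          push_cast at h
          exact h
        push_cast
        have hD1 : ((i:K)+1) * (i.factorial : K) * (((m:K)+1) * (m.factorial : K)) ≠ 0 :=
          mul_ne_zero (mul_ne_zero hi1 (f0 i)) (mul_ne_zero hm1 (f0 m))
        have hD2 : (i.factorial : K) * (((m:K)+1) * (m.factorial : K)) ≠ 0 :=
          mul_ne_zero (f0 i) (mul_ne_zero hm1 (f0 m))
        have hD3 : ((i:K)+1+1) * (((i:K)+1) * (i.factorial : K)) * (m.factorial : K) ≠ 0 :=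
          mul_ne_zero (mul_ne_zero hi2 (mul_ne_zero hi1 (f0 i))) (f0 m)
        rw [← mul_div_assoc, div_add_div _ _ hD2 hD3,
          div_eq_div_iff hD1 (mul_ne_zero hD2 hD3)]
        ring
  · -- parity mismatch: everything is zero
    rw [aco, if_neg hp]
    have t1 : (if j = 0 then (0:K) else aco K n (j-1)) = 0 := by
      rcases Nat.eq_zero_or_pos j with h | h
      · rw [if_pos h]
      · rw [if_neg (by omega), aco, if_neg (by omega)]
    have t2 : (if j < n then ((2*(j+1) : ℕ) : K) * aco K n (j+1) else 0) = 0 := by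
      rcases lt_or_ge j n with h | h
      · rw [if_pos h, aco, if_neg (by omega), mul_zero]
      · rw [if_neg (by omega)]
    rw [t1, t2, add_zero]
section
set_option linter.unusedSectionVars false
variable {K R : Type*} [Field K] [CharZero K] [Ring R] [Algebra K R]
variable (A B C : R)

lemma main_bch (h1 : A * B - B * A = C) (h2 : A * C = C * A) (h3 : B * C = C * B) (n : ℕ) :
    (A + B) ^ n = ∑ k ∈ Finset.range (n+1),
      aco K n k • (((-(2:K)⁻¹) • C) ^ ((n-k)/2) * Sk K A B k) := by
  induction n with
  | zero => simp [aco, Sk]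
  | succ n ih =>
    have hDcomm : ∀ (m : ℕ) (x : R),
        (A+B) * (((-(2:K)⁻¹) • C)^m * x) = ((-(2:K)⁻¹) • C)^m * ((A+B) * x) := by
      intro m x
      have hc : Commute (A+B) (((-(2:K)⁻¹) • C)^m) :=
        (((show Commute A C from h2).add_left (show Commute B C from h3)).smul_right
          (-(2:K)⁻¹)).pow_right m
      rw [← mul_assoc, hc.eq, mul_assoc]
    have hCx : ∀ x : R, C * x = (-2:K) • (((-(2:K)⁻¹) • C) * x) := by
      intro x
      rw [smul_mul_assoc, smul_smul]
      norm_num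
    have hterm : ∀ k ∈ Finset.range (n+1),
        (A+B) * (aco K n k • (((-(2:K)⁻¹) • C)^((n-k)/2) * Sk K A B k))
        = aco K n k • (((-(2:K)⁻¹) • C)^((n-k)/2) * Sk K A B (k+1))
          + ((2*(k:K)) * aco K n k) • (((-(2:K)⁻¹) • C)^((n-k)/2 + 1) * Sk K A B (k-1)) := by
      intro k hk
      rw [mul_smul_comm, hDcomm, key_step (K:=K) A B C h1 h2 h3 k, mul_sub, smul_sub,
        mul_smul_comm, hCx (Sk K A B (k-1)), mul_smul_comm, ← mul_assoc, ← pow_succ,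
        smul_smul, smul_smul, sub_eq_add_neg, ← neg_smul,
        show -(aco K n k * (k:K) * (-2)) = (2*(k:K)) * aco K n k from by ring]
    rw [pow_succ', ih, Finset.mul_sum, Finset.sum_congr rfl hterm, Finset.sum_add_distrib]
    have hsplit : ∀ j ∈ Finset.range (n+2),
        aco K (n+1) j • (((-(2:K)⁻¹) • C)^((n+1-j)/2) * Sk K A B j)
        = (if j = 0 then 0 else aco K n (j-1)) •
            (((-(2:K)⁻¹) • C)^((n+1-j)/2) * Sk K A B j)
          + (if j < n then ((2*(j+1) : ℕ) : K) * aco K n (j+1) else 0) •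
            (((-(2:K)⁻¹) • C)^((n+1-j)/2) * Sk K A B j) := by
      intro j hj
      have : j ≤ n + 1 := by have := Finset.mem_range.mp hj; omega
      rw [aco_rec K n j this, add_smul]
    rw [Finset.sum_congr rfl hsplit, Finset.sum_add_distrib]
    congr 1
    · -- first pieces
      rw [Finset.sum_range_succ' _ (n+1), if_pos rfl, zero_smul, add_zero]
      refine Finset.sum_congr rfl fun i hi => ?_
      rw [if_neg (Nat.succ_ne_zero i), show n + 1 - (i+1) = n - i by omega,
        show i + 1 - 1 = i by omega]
    · -- second pieces
      have hR : ∑ j ∈ Finset.range (n+2),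
          (if j < n then ((2*(j+1) : ℕ) : K) * aco K n (j+1) else 0) •
            (((-(2:K)⁻¹) • C)^((n+1-j)/2) * Sk K A B j)
          = ∑ j ∈ Finset.range n, (((2*(j+1) : ℕ) : K) * aco K n (j+1)) •
            (((-(2:K)⁻¹) • C)^((n+1-j)/2) * Sk K A B j) := by
        rw [Finset.sum_range_succ, Finset.sum_range_succ,
          if_neg (by omega : ¬ (n+1) < n), if_neg (by omega : ¬ n < n),
          zero_smul, zero_smul, add_zero, add_zero]
        exact Finset.sum_congr rfl fun j hj => by rw [if_pos (Finset.mem_range.mp hj)]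
      rw [hR, Finset.sum_range_succ' _ n]
      simp only [Nat.cast_zero, mul_zero, zero_mul, zero_smul, add_zero]
      refine Finset.sum_congr rfl fun i hi => ?_
      have hin : i < n := Finset.mem_range.mp hi
      rw [show i + 1 - 1 = i by omega]
      by_cases hp : (i+1) % 2 = n % 2
      · rw [show (n - (i+1))/2 + 1 = (n+1-i)/2 by omega]
        congr 1
        push_cast
        ring
      · simp [aco, hp]
end


/-- Baker–Campbell–Hausdorff-type expansion: if `[A,B] = C` with `C` central for `A` and `B`, then
`(A+B)^n = Σ_{k ≡ n (2)} (−C/2)^{(n−k)/2} n!/(k!((n−k)/2)!) Σ_r C(k,r) A^r B^{k−r}`. -/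
theorem stmt_3 (K R : Type*) [Field K] [CharZero K] [Ring R] [Algebra K R]
    (A B C : R) (h1 : A * B - B * A = C) (h2 : A * C = C * A) (h3 : B * C = C * B) (n : ℕ) :
    (A + B) ^ n =
      ∑ k ∈ Finset.range (n + 1),
        if k % 2 = n % 2 then
          ((n.factorial : K) / ((k.factorial : K) * (((n - k) / 2).factorial : K))) •
            (((-(2 : K)⁻¹) • C) ^ ((n - k) / 2) *
              ∑ r ∈ Finset.range (k + 1), (k.choose r : K) • (A ^ r * B ^ (k - r)))
        else 0 := by
  rw [main_bch (K := K) A B C h1 h2 h3 n]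
  refine Finset.sum_congr rfl fun k hk => ?_
  rw [aco, Sk]
  split_ifs with h
  · rfl
  · rw [zero_smul]
end

section
/- Let K have characteristic zero and let A = K[x,y]/I where I = (x^k y^m : m > a or k + nm > b) for integers n ≥ 0, a ≥ 1, b > na. Then A is a finite-dimensional local K-algebra of dimension (a+1)(b+1) − na(a+1)/2, with maximal ideal generated by the images of x and y. -/
/-!
`I` is the monomial ideal spanned by the monomials whose exponents lie in the upper set
`{(k, m) | a < m ∨ b < k + n m}`, so the monomials with exponents in the complement form a
basis of the quotient; counting them row by row gives `∑_{m ≤ a} (b + 1 - n m)`. The images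
of `x` and `y` are nilpotent (`x ^ (b + 1), y ^ (a + 1) ∈ I`), and the ideal they span is the
kernel of evaluation at the origin, hence maximal and contained in every prime: it is the
unique maximal ideal.
-/

theorem Ideal.IsMaximal.map_quotientMk {R : Type*} [CommRing R] {I M : Ideal R}
    (hM : M.IsMaximal) (hIM : I ≤ M) : (M.map (Ideal.Quotient.mk I)).IsMaximal := by
  refine (Ideal.map_eq_top_or_isMaximal_of_surjective _ Ideal.Quotient.mk_surjective
    hM).resolve_left fun h => hM.ne_top ?_
  rw [← Ideal.comap_map_mk hIM, h, Ideal.comap_top]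

theorem IsLocalRing.of_isMaximal_of_le_nilradical {R : Type*} [CommRing R] {J : Ideal R}
    (hJ : J.IsMaximal) (hnil : J ≤ nilradical R) : IsLocalRing R :=
  of_unique_max_ideal ⟨J, hJ, fun M hM =>
    (hJ.eq_of_le hM.ne_top (hnil.trans (nilradical_le_prime M))).symm⟩

open MvPolynomial

namespace MvPolynomial

variable {σ R : Type*} [CommRing R]

theorem mem_restrictSupportIdeal {s : Set (σ →₀ ℕ)} (hs : IsUpperSet s)
    {p : MvPolynomial σ R} :
    p ∈ restrictSupportIdeal R s hs ↔ p ∈ restrictSupport R s :=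
  Iff.rfl

theorem restrictSupportIdeal_eq_span {s : Set (σ →₀ ℕ)} (hs : IsUpperSet s) :
    restrictSupportIdeal R s hs = Ideal.span ((monomial · 1) '' s) := by
  ext p
  rw [mem_ideal_span_monomial_image, mem_restrictSupportIdeal, mem_restrictSupport_iff]
  refine ⟨fun hp d hd => ⟨d, hp hd, le_rfl⟩, fun hp d hd => ?_⟩
  obtain ⟨e, he, hle⟩ := hp d hd
  exact hs hle he

theorem isCompl_restrictSupport_compl (s : Set (σ →₀ ℕ)) :
    IsCompl (restrictSupport R s) (restrictSupport R sᶜ) := by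
  have h : IsCompl (Finsupp.supported R R s) (Finsupp.supported R R sᶜ) :=
    ⟨Finsupp.disjoint_supported_supported disjoint_compl_right, by
      rw [codisjoint_iff, ← Finsupp.supported_union, Set.union_compl_self,
        Finsupp.supported_univ]⟩
  rw [restrictSupport, restrictSupport, AddMonoidAlgebra.supported_eq_map,
    AddMonoidAlgebra.supported_eq_map]
  exact h.map (Submodule.orderIsoMapComap (AddMonoidAlgebra.coeffLinearEquiv R).symm)

variable (R) in
noncomputable def basisQuotientRestrictSupportIdeal (s : Set (σ →₀ ℕ)) (hs : IsUpperSet s) :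
    Module.Basis ↥sᶜ R (MvPolynomial σ R ⧸ restrictSupportIdeal R s hs) :=
  (basisRestrictSupport R sᶜ).map
    ((Submodule.Quotient.restrictScalarsEquiv R _).symm ≪≫ₗ
      Submodule.quotEquivOfEq _ _ (restrictScalars_restrictSupportIdeal R s hs) ≪≫ₗ
      Submodule.quotientEquivOfIsCompl _ _ (isCompl_restrictSupport_compl s)).symm

theorem idealOfVars_eq_ker_constantCoeff : idealOfVars σ R = RingHom.ker constantCoeff := by
  ext p
  rw [← pow_one (idealOfVars σ R), mem_pow_idealOfVars_iff', RingHom.mem_ker]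
  simp [Finsupp.degree_eq_zero_iff, constantCoeff_eq]

theorem restrictSupportIdeal_le_idealOfVars {s : Set (σ →₀ ℕ)} (hs : IsUpperSet s)
    (h0 : 0 ∉ s) : restrictSupportIdeal R s hs ≤ idealOfVars σ R := by
  intro p hp
  rw [idealOfVars_eq_ker_constantCoeff, RingHom.mem_ker, constantCoeff_eq]
  exact notMem_support_iff.1 fun h => h0 (hp h)

theorem isNilpotent_mk_X_of_single_mem {s : Set (σ →₀ ℕ)} (hs : IsUpperSet s)
    {i : σ} {N : ℕ} (h : Finsupp.single i N ∈ s) :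
    IsNilpotent (Ideal.Quotient.mk (restrictSupportIdeal R s hs) (X i)) := by
  refine ⟨N, ?_⟩
  rw [← map_pow, Ideal.Quotient.eq_zero_iff_mem, X_pow_eq_monomial, mem_restrictSupportIdeal,
    monomial_mem_restrictSupport]
  exact Or.inl h

theorem map_idealOfVars_le_nilradical {I : Ideal (MvPolynomial σ R)}
    (hX : ∀ i, IsNilpotent (Ideal.Quotient.mk I (X i))) :
    (idealOfVars σ R).map (Ideal.Quotient.mk I) ≤ nilradical _ := by
  rw [Ideal.map_span, Ideal.span_le]
  rintro _ ⟨_, ⟨i, rfl⟩, rfl⟩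
  exact hX i

theorem monomial_one_fin_two (d : Fin 2 →₀ ℕ) :
    monomial d (1 : R) = X 0 ^ d 0 * X 1 ^ d 1 := by
  rw [monomial_eq, C_1, one_mul, Finsupp.prod_fintype _ _ (by simp), Fin.prod_univ_two]

theorem map_idealOfVars_fin_two {S : Type*} [CommRing S]
    (f : MvPolynomial (Fin 2) R →+* S) :
    (idealOfVars (Fin 2) R).map f = Ideal.span {f (X 0), f (X 1)} := by
  rw [Ideal.map_span, ← Set.range_comp]
  congr 1
  ext
  simp [Fin.exists_fin_two, eq_comm]

theorem isMaximal_idealOfVars {K : Type*} [Field K] : (idealOfVars σ K).IsMaximal := by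
  rw [idealOfVars_eq_ker_constantCoeff]
  exact RingHom.ker_isMaximal_of_surjective _ fun c => ⟨C c, constantCoeff_C σ c⟩

theorem exists_isLocalRing_maximalIdeal_eq_map_idealOfVars {K : Type*} [Field K]
    {I : Ideal (MvPolynomial σ K)} (hI : I ≤ idealOfVars σ K)
    (hX : ∀ i, IsNilpotent (Ideal.Quotient.mk I (X i))) :
    ∃ h : IsLocalRing (MvPolynomial σ K ⧸ I),
      @IsLocalRing.maximalIdeal _ _ h = (idealOfVars σ K).map (Ideal.Quotient.mk I) :=
  have hJ := isMaximal_idealOfVars.map_quotientMk hI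
  have := IsLocalRing.of_isMaximal_of_le_nilradical hJ (map_idealOfVars_le_nilradical hX)
  ⟨this, (IsLocalRing.eq_maximalIdeal hJ).symm⟩

end MvPolynomial

open Finset

theorem sum_range_succ_sub_mul {n a b : ℕ} (h : n * a ≤ b) :
    ∑ m ∈ range (a + 1), (b + 1 - n * m) = (a + 1) * (b + 1) - n * a * (a + 1) / 2 := by
  have hsplit : ∑ m ∈ range (a + 1), (b + 1 - n * m) + n * ∑ m ∈ range (a + 1), m =
      (a + 1) * (b + 1) := by
    rw [mul_sum, ← sum_add_distrib]
    calc _ = ∑ _m ∈ range (a + 1), (b + 1) := sum_congr rfl fun m hm => by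
            have := Nat.mul_le_mul_left n (mem_range_succ_iff.1 hm)
            omega
      _ = _ := by rw [sum_const, card_range, smul_eq_mul]
  have hgauss : n * a * (a + 1) = n * (∑ m ∈ range (a + 1), m) * 2 := by
    rw [mul_assoc, mul_assoc, sum_range_id_mul_two, Nat.add_sub_cancel, mul_comm a]
  rw [hgauss, Nat.mul_div_cancel _ two_pos]
  omega

theorem card_filter_add_mul_le (n a b : ℕ) :
    #((range (b + 1) ×ˢ range (a + 1)).filter fun p => p.1 + n * p.2 ≤ b) =
      ∑ m ∈ range (a + 1), (b + 1 - n * m) := by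
  rw [card_filter, sum_product_right]
  refine sum_congr rfl fun m _ => ?_
  rw [← card_filter, ← card_range (b + 1 - n * m)]
  congr 1
  ext k
  simp only [mem_filter, mem_range]
  omega

section HirzebruchExponents

def hirzebruchExponents (n a b : ℕ) : Set (Fin 2 →₀ ℕ) :=
  {d | a < d 1 ∨ b < d 0 + n * d 1}

variable (n a b : ℕ)

theorem isUpperSet_hirzebruchExponents : IsUpperSet (hirzebruchExponents n a b) := by
  intro d e hde (hd : a < d 1 ∨ b < d 0 + n * d 1)
  show a < e 1 ∨ b < e 0 + n * e 1
  have := hde 0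
  have := hde 1
  have := Nat.mul_le_mul_left n (hde 1)
  omega

theorem zero_notMem_hirzebruchExponents : 0 ∉ hirzebruchExponents n a b := by
  simp [hirzebruchExponents]

theorem span_monomials_eq_restrictSupportIdeal_hirzebruchExponents {R : Type*} [CommRing R] :
    Ideal.span {p : MvPolynomial (Fin 2) R | ∃ k m : ℕ, (a < m ∨ b < k + n * m) ∧
      p = X 0 ^ k * X 1 ^ m} =
      restrictSupportIdeal R (hirzebruchExponents n a b)
        (isUpperSet_hirzebruchExponents n a b) := by
  rw [restrictSupportIdeal_eq_span]
  congr 1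
  ext p
  simp only [Set.mem_image, monomial_one_fin_two]
  constructor
  · rintro ⟨k, m, hkm, rfl⟩
    exact ⟨Finsupp.single 0 k + Finsupp.single 1 m, by simpa [hirzebruchExponents] using hkm,
      by simp⟩
  · rintro ⟨d, hd, rfl⟩
    exact ⟨d 0, d 1, hd, rfl⟩

theorem compl_hirzebruchExponents_eq_map :
    (hirzebruchExponents n a b)ᶜ =
      ↑(((range (b + 1) ×ˢ range (a + 1)).filter fun p => p.1 + n * p.2 ≤ b).map
        ((finTwoArrowEquiv ℕ).symm.trans Finsupp.equivFunOnFinite.symm).toEmbedding) := by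
  ext d
  rw [coe_map, Equiv.coe_toEmbedding, Equiv.image_eq_preimage_symm]
  simpa [hirzebruchExponents] using fun h _ => le_self_add.trans h

theorem finite_compl_hirzebruchExponents : (hirzebruchExponents n a b)ᶜ.Finite := by
  rw [compl_hirzebruchExponents_eq_map]
  exact finite_toSet _

variable {n a b} in
theorem ncard_compl_hirzebruchExponents (h : n * a ≤ b) :
    (hirzebruchExponents n a b)ᶜ.ncard = (a + 1) * (b + 1) - n * a * (a + 1) / 2 := by
  rw [compl_hirzebruchExponents_eq_map, Set.ncard_coe_finset, card_map, card_filter_add_mul_le,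
    sum_range_succ_sub_mul h]

end HirzebruchExponents

theorem stmt_7_general (K : Type*) [Field K] (n a b : ℕ) (hb : n * a < b)
    (I : Ideal (MvPolynomial (Fin 2) K))
    (hI : I = Ideal.span {p | ∃ k m : ℕ, (a < m ∨ b < k + n * m) ∧
      p = X 0 ^ k * X 1 ^ m}) :
    Module.Finite K (MvPolynomial (Fin 2) K ⧸ I) ∧
    Module.finrank K (MvPolynomial (Fin 2) K ⧸ I)
      = (a + 1) * (b + 1) - n * a * (a + 1) / 2 ∧
    ∃ h : IsLocalRing (MvPolynomial (Fin 2) K ⧸ I),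
      @IsLocalRing.maximalIdeal (MvPolynomial (Fin 2) K ⧸ I) _ h =
        Ideal.span {Ideal.Quotient.mk I (X 0), Ideal.Quotient.mk I (X 1)} := by
  rw [span_monomials_eq_restrictSupportIdeal_hirzebruchExponents] at hI
  subst hI
  have hup := isUpperSet_hirzebruchExponents n a b
  have := (finite_compl_hirzebruchExponents n a b).to_subtype
  let B := basisQuotientRestrictSupportIdeal K _ hup
  refine ⟨.of_basis B, ?_, ?_⟩
  · rw [Module.finrank_eq_nat_card_basis B, Nat.card_coe_set_eq,
      ncard_compl_hirzebruchExponents hb.le]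
  · rw [← map_idealOfVars_fin_two]
    refine exists_isLocalRing_maximalIdeal_eq_map_idealOfVars
      (restrictSupportIdeal_le_idealOfVars hup (zero_notMem_hirzebruchExponents n a b)) fun i => ?_
    fin_cases i
    · exact isNilpotent_mk_X_of_single_mem hup (N := b + 1) (by simp [hirzebruchExponents])
    · exact isNilpotent_mk_X_of_single_mem hup (N := a + 1) (by simp [hirzebruchExponents])

/-- The algebra `A = K[x,y]/(x^k y^m : m > a ∨ k + nm > b)` is a finite-dimensional local
algebra of dimension `(a+1)(b+1) − na(a+1)/2`, with maximal ideal generated by `x` and `y`. -/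
theorem stmt_7 (K : Type*) [Field K] [CharZero K] (n a b : ℕ) (ha : 1 ≤ a) (hb : n * a < b)
    (I : Ideal (MvPolynomial (Fin 2) K))
    (hI : I = Ideal.span {p | ∃ k m : ℕ, (a < m ∨ b < k + n * m) ∧
      p = X 0 ^ k * X 1 ^ m}) :
    Module.Finite K (MvPolynomial (Fin 2) K ⧸ I) ∧
    Module.finrank K (MvPolynomial (Fin 2) K ⧸ I)
      = (a + 1) * (b + 1) - n * a * (a + 1) / 2 ∧
    ∃ h : IsLocalRing (MvPolynomial (Fin 2) K ⧸ I),
      @IsLocalRing.maximalIdeal (MvPolynomial (Fin 2) K ⧸ I) _ h =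
        Ideal.span {Ideal.Quotient.mk I (X 0), Ideal.Quotient.mk I (X 1)} :=
  stmt_7_general K n a b hb I hI
end

section
/- Let δ_1 = ∂_x + x∂_y and δ_2 = ∂_y act on A_{a,b} = K[x,y]/(x^k y^m : m > a or k + m > b) with b ≥ 2a. Then the subalgebra A'_{a,b} = K[δ_1, δ_2] ⊆ End_K(A_{a,b}) has K-dimension (a+1)(b+1) − a(a+1)/2, equal to dim_K A_{a,b}. -/
/-!
The shear automorphism `σ : (x, y) ↦ (x, y + x²/2)` of `K[x,y]` satisfies
`∂ₓ ∘ σ = σ ∘ (∂ₓ + x ∂_y)` and `∂_y ∘ σ = σ ∘ ∂_y`. Identifying `A_{a,b}` with the span of its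
standard monomials `xᵏ yᵐ` (`m ≤ a`, `k + m ≤ b`) and then applying `σ` embeds `A_{a,b}` into
`K[x,y]` so that `δ₁, δ₂` become `∂ₓ, ∂_y`; in particular they commute.

If a commutative algebra `B` of operators on a finite-dimensional `V` has a functional `ε` such
that `ε (T v) = 0` for all `T ∈ B` forces `v = 0`, then `T ↦ ε ∘ T` and `v ↦ (T ↦ ε (T v))` are
injections `B → V*` and `V → B*`, so `dim B = dim V`. Here `ε` is the constant coefficient after
the embedding, and the hypothesis is Taylor's formula in characteristic zero. Counting standard
monomials gives `∑_{m ≤ a} (b + 1 - m)`.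
-/

open MvPolynomial Finset

open Module in
theorem Subalgebra.finrank_eq_of_forall_apply_eq_zero {K V : Type*} [Field K] [AddCommGroup V]
    [Module K V] [FiniteDimensional K V] (B : Subalgebra K (Module.End K V))
    (hB : ∀ S ∈ B, ∀ T ∈ B, Commute S T) (ε : Module.Dual K V)
    (hε : ∀ v, (∀ T ∈ B, ε (T v) = 0) → v = 0) :
    finrank K B = finrank K V := by
  let pairing : B →ₗ[K] Module.Dual K V := LinearMap.llcomp K V V K ε ∘ₗ B.val.toLinearMap
  have h_le : finrank K B ≤ finrank K V := by
    rw [← Subspace.dual_finrank_eq (V := V)]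
    refine LinearMap.finrank_le_finrank_of_injective
      ((injective_iff_map_eq_zero pairing).mpr fun T hT => ?_)
    refine Subtype.ext (LinearMap.ext fun v => hε _ fun S hS => ?_)
    rw [← Module.End.mul_apply, (hB S hS T T.2).eq]
    exact LinearMap.congr_fun hT (S v)
  have h_ge : finrank K V ≤ finrank K B := by
    rw [← Subspace.dual_finrank_eq (V := B)]
    exact LinearMap.finrank_le_finrank_of_injective
      ((injective_iff_map_eq_zero pairing.flip).mpr fun v hv =>
        hε v fun T hT => LinearMap.congr_fun hv ⟨T, hT⟩)
  exact le_antisymm h_le h_ge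

namespace MvPolynomial

theorem coeff_pderiv_iterate {σ R : Type*} [CommSemiring R] (i : σ) (n : ℕ)
    (p : MvPolynomial σ R) (m : σ →₀ ℕ) :
    coeff m ((pderiv i)^[n] p) =
      coeff (m + Finsupp.single i n) p * ((m i + n).descFactorial n : ℕ) := by
  induction n generalizing m p with
  | zero => simp
  | succ n ih =>
    rw [Function.iterate_succ_apply, ih, coeff_pderiv, add_assoc, Finsupp.single_add,
      Finsupp.add_apply, Finsupp.single_eq_same, ← add_assoc (m i), Nat.succ_descFactorial_succ]
    push_cast
    ring

theorem pderiv_pderiv_comm {σ R : Type*} [CommSemiring R] (i j : σ) (p : MvPolynomial σ R) :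
    pderiv i (pderiv j p) = pderiv j (pderiv i p) := by
  rcases eq_or_ne i j with rfl | hij
  · rfl
  ext m
  simp only [coeff_pderiv, Finsupp.add_apply, Finsupp.single_eq_of_ne hij,
    Finsupp.single_eq_of_ne hij.symm, add_zero, add_right_comm m]
  ring

theorem coeff_zero_pderiv_iterate_pderiv_iterate {R : Type*} [CommSemiring R] (i j : ℕ)
    (p : MvPolynomial (Fin 2) R) :
    coeff 0 ((pderiv 0)^[i] ((pderiv 1)^[j] p)) =
      coeff (Finsupp.single 0 i + Finsupp.single 1 j) p * (i.factorial * j.factorial : ℕ) := by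
  rw [coeff_pderiv_iterate, coeff_pderiv_iterate]
  simp [Nat.descFactorial_self, mul_assoc, mul_comm]

theorem eq_zero_of_forall_coeff_zero_pderiv_iterate {K : Type*} [Field K] [CharZero K]
    {p : MvPolynomial (Fin 2) K} (h : ∀ i j, coeff 0 ((pderiv 0)^[i] ((pderiv 1)^[j] p)) = 0) :
    p = 0 := by
  ext d
  have hd : d = Finsupp.single 0 (d 0) + Finsupp.single 1 (d 1) := by
    ext k; fin_cases k <;> simp
  have := h (d 0) (d 1)
  rw [coeff_zero_pderiv_iterate_pderiv_iterate, ← hd] at this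
  simpa [Nat.factorial_ne_zero] using this

theorem derivation_aeval_eq {σ R A : Type*} [CommSemiring R] [CommSemiring A]
    [Algebra R A] (f : σ → A) (D : Derivation R A A)
    (D' : Derivation R (MvPolynomial σ R) (MvPolynomial σ R))
    (h : ∀ i, D (f i) = aeval f (D' (X i))) (p : MvPolynomial σ R) :
    D (aeval f p) = aeval f (D' p) := by
  induction p using MvPolynomial.induction_on with
  | C c => simp [← algebraMap_eq]
  | add p q hp hq => simp [hp, hq]
  | mul_X p i hp => simp [Derivation.leibniz, hp, h]

section StandardMonomials

variable {σ R : Type*} [CommRing R] {s : Set (σ →₀ ℕ)}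

theorem mem_ideal_span_monomial_compl_iff (hs : IsLowerSet s) {p : MvPolynomial σ R} :
    p ∈ Ideal.span ((monomial · (1 : R)) '' sᶜ) ↔ ∀ d ∈ p.support, d ∉ s := by
  rw [mem_ideal_span_monomial_image]
  exact forall₂_congr fun d _ =>
    ⟨fun ⟨e, he, hed⟩ hd => he (hs hed hd), fun hd => ⟨d, hd, le_rfl⟩⟩

theorem pderiv_monomial_mem_restrictSupport (hs : IsLowerSet s) {d : σ →₀ ℕ} (hd : d ∈ s)
    (i : σ) (r : R) : pderiv i (monomial d r) ∈ restrictSupport R s := by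
  rw [pderiv_monomial]
  exact (monomial_mem_restrictSupport R).mpr (Or.inl (hs tsub_le_self hd))

variable (I : Ideal (MvPolynomial σ R)) (hI : ∀ p, p ∈ I ↔ ∀ d ∈ p.support, d ∉ s)
include hI

theorem bijective_mk_comp_subtype_restrictSupport :
    Function.Bijective
      ((Ideal.Quotient.mkₐ R I).toLinearMap ∘ₗ (restrictSupport R s).subtype) := by
  constructor
  · refine (injective_iff_map_eq_zero _).mpr fun r hr => ?_
    have hrI : (r : MvPolynomial σ R) ∈ I := Ideal.Quotient.eq_zero_iff_mem.mp hr
    refine Subtype.ext (support_eq_empty.mp (Finset.eq_empty_of_forall_notMem fun d hd => ?_))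
    exact (hI _).mp hrI d hd (r.2 hd)
  · intro z
    obtain ⟨p, rfl⟩ := Ideal.Quotient.mk_surjective z
    induction p using MvPolynomial.induction_on' with
    | monomial d c =>
      by_cases hd : d ∈ s
      · exact ⟨⟨monomial d c, (monomial_mem_restrictSupport R).mpr (Or.inl hd)⟩, rfl⟩
      · refine ⟨0, Eq.symm (Ideal.Quotient.eq_zero_iff_mem.mpr ((hI _).mpr fun e he => ?_))⟩
        rwa [Finset.mem_singleton.mp (support_monomial_subset he)]
    | add p q hp hq =>
      obtain ⟨r, hr⟩ := hp
      obtain ⟨r', hr'⟩ := hq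
      exact ⟨r + r', by rw [map_add, hr, hr', map_add]⟩

noncomputable def restrictSupportEquivQuotient :
    restrictSupport R s ≃ₗ[R] MvPolynomial σ R ⧸ I :=
  LinearEquiv.ofBijective _ (bijective_mk_comp_subtype_restrictSupport I hI)

theorem finrank_quotient_eq_natCard [Nontrivial R] :
    Module.finrank R (MvPolynomial σ R ⧸ I) = Nat.card s :=
  (restrictSupportEquivQuotient I hI).finrank_eq.symm.trans
    (Module.finrank_eq_nat_card_basis (basisRestrictSupport R s))

theorem finite_quotient_of_finite_exponents [Finite s] :
    Module.Finite R (MvPolynomial σ R ⧸ I) :=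
  have := Module.Finite.of_basis (basisRestrictSupport R s)
  .equiv (restrictSupportEquivQuotient I hI)

theorem semiconj_restrictSupportEquivQuotient_symm {M : Type*} [AddCommGroup M] [Module R M]
    (ψ : MvPolynomial σ R →ₗ[R] M) (D : Module.End R (MvPolynomial σ R ⧸ I))
    (δ : Module.End R (MvPolynomial σ R)) (δ' : Module.End R M)
    (hδ : ∀ d ∈ s, δ (monomial d 1) ∈ restrictSupport R s)
    (hD : ∀ d ∈ s,
      D (Ideal.Quotient.mk I (monomial d 1)) = Ideal.Quotient.mk I (δ (monomial d 1)))
    (hψ : Function.Semiconj ψ δ δ') :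
    Function.Semiconj
      (ψ ∘ₗ (restrictSupport R s).subtype ∘ₗ (restrictSupportEquivQuotient I hI).symm) D δ' := by
  have key : ∀ r ∈ restrictSupport R s,
      δ r ∈ restrictSupport R s ∧ D (Ideal.Quotient.mk I r) = Ideal.Quotient.mk I (δ r) := by
    intro r hr
    rw [restrictSupport_eq_span] at hr
    induction hr using Submodule.span_induction with
    | mem r hr =>
      obtain ⟨d, hd, rfl⟩ := hr
      exact ⟨hδ d hd, hD d hd⟩
    | zero => simp
    | add r r' _ _ hr hr' => exact ⟨map_add δ r r' ▸ add_mem hr.1 hr'.1, by simp [hr.2, hr'.2]⟩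
    | smul c r _ hr =>
      refine ⟨map_smul δ c r ▸ Submodule.smul_mem _ c hr.1, ?_⟩
      simp only [← Ideal.Quotient.mkₐ_eq_mk R, map_smul] at hr ⊢
      rw [hr.2]
  intro z
  obtain ⟨r, rfl⟩ := (restrictSupportEquivQuotient I hI).surjective z
  obtain ⟨hδr, hDr⟩ := key r r.2
  have : D (restrictSupportEquivQuotient I hI r) =
      restrictSupportEquivQuotient I hI ⟨δ r, hδr⟩ := hDr
  simpa [this] using hψ r

end StandardMonomials

end MvPolynomial

open Module in
theorem finrank_adjoin_eq_of_semiconj_pderiv {K V : Type*} [Field K] [CharZero K]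
    [AddCommGroup V] [Module K V] [FiniteDimensional K V] {D₁ D₂ : Module.End K V}
    {Φ : V →ₗ[K] MvPolynomial (Fin 2) K} (hΦ : Function.Injective Φ)
    (h₁ : Function.Semiconj Φ D₁ (pderiv 0)) (h₂ : Function.Semiconj Φ D₂ (pderiv 1)) :
    finrank K (Algebra.adjoin K {D₁, D₂}) = finrank K V := by
  have hcomm : Commute D₁ D₂ := LinearMap.ext fun v => hΦ <| by
    simp only [Module.End.mul_apply, h₁ _, h₂ _, pderiv_pderiv_comm]
  have hB : ∀ S ∈ Algebra.adjoin K {D₁, D₂}, ∀ T ∈ Algebra.adjoin K {D₁, D₂}, Commute S T := by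
    have hgen : ∀ S ∈ ({D₁, D₂} : Set (Module.End K V)), ∀ T ∈ ({D₁, D₂} : Set _), Commute S T := by
      rintro S (rfl | rfl) T (rfl | rfl)
      exacts [Commute.refl _, hcomm, hcomm.symm, Commute.refl _]
    intro S hS T hT
    refine Algebra.commute_of_mem_adjoin_of_forall_mem_commute hT fun T' hT' => ?_
    exact (Algebra.commute_of_mem_adjoin_of_forall_mem_commute hS fun S' hS' =>
      (hgen S' hS' T' hT').symm).symm
  refine Subalgebra.finrank_eq_of_forall_apply_eq_zero _ hB (lcoeff K 0 ∘ₗ Φ) fun v hv => ?_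
  rw [← map_eq_zero_iff Φ hΦ]
  refine eq_zero_of_forall_coeff_zero_pderiv_iterate fun i j => ?_
  have hT : D₁ ^ i * D₂ ^ j ∈ Algebra.adjoin K {D₁, D₂} :=
    mul_mem (pow_mem (Algebra.subset_adjoin (by simp)) i)
      (pow_mem (Algebra.subset_adjoin (by simp)) j)
  simpa [Module.End.pow_apply, (h₁.iterate_right i) _, (h₂.iterate_right j) _] using hv _ hT

section Shear

variable {K : Type*} [Field K]

noncomputable def shear : MvPolynomial (Fin 2) K →ₐ[K] MvPolynomial (Fin 2) K :=
  aeval ![X 0, X 1 + C 2⁻¹ * X 0 ^ 2]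

noncomputable def shearedPDeriv :
    Derivation K (MvPolynomial (Fin 2) K) (MvPolynomial (Fin 2) K) :=
  pderiv 0 + (X 0 : MvPolynomial (Fin 2) K) • pderiv 1

theorem shearedPDeriv_apply (p : MvPolynomial (Fin 2) K) :
    shearedPDeriv p = pderiv 0 p + X 0 * pderiv 1 p := rfl

theorem semiconj_shear_shearedPDeriv [CharZero K] :
    Function.Semiconj shear (shearedPDeriv (K := K)) (pderiv 0) := fun p => by
  refine (derivation_aeval_eq _ _ _ (fun i => ?_) p).symm
  have h2 : (C 2⁻¹ * 2 : MvPolynomial (Fin 2) K) = 1 := by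
    rw [← map_ofNat C, ← C_mul, inv_mul_cancel₀ two_ne_zero, C_1]
  fin_cases i
  · simp [shearedPDeriv_apply]
  · simp [shearedPDeriv_apply]
    linear_combination X 0 * h2

theorem semiconj_shear_pderiv_one :
    Function.Semiconj shear (pderiv (R := K) (1 : Fin 2)) (pderiv 1) := fun p => by
  refine (derivation_aeval_eq _ _ _ (fun i => ?_) p).symm
  fin_cases i <;> simp [pderiv_X]

theorem shear_injective : Function.Injective (shear (K := K)) := by
  let unshear : MvPolynomial (Fin 2) K →ₐ[K] MvPolynomial (Fin 2) K :=
    aeval ![X 0, X 1 - C 2⁻¹ * X 0 ^ 2]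
  have h : unshear.comp shear = AlgHom.id K _ := by
    ext i; fin_cases i <;> simp [unshear, shear]
  exact Function.LeftInverse.injective (g := unshear) fun p => AlgHom.congr_fun h p

end Shear

theorem card_filter_add_le_product {a b : ℕ} (hab : a ≤ b) :
    #{p ∈ range (b + 1) ×ˢ range (a + 1) | p.1 + p.2 ≤ b} =
      (a + 1) * (b + 1) - a * (a + 1) / 2 := by
  have hrow : ∀ m ∈ range (a + 1), #{k ∈ range (b + 1) | k + m ≤ b} = b + 1 - m := by
    intro m _
    rw [← card_range (b + 1 - m)]
    congr 1
    ext k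
    simp only [mem_filter, mem_range]
    omega
  rw [card_filter, sum_product_right]
  simp only [← card_filter]
  rw [sum_congr rfl hrow, sum_tsub_distrib _ fun m hm => by simp at hm; omega, sum_const,
    card_range, smul_eq_mul, sum_range_id, Nat.add_sub_cancel, mul_comm a]

def standardExponents (a b : ℕ) : Set (Fin 2 →₀ ℕ) := {d | d 1 ≤ a ∧ d 0 + d 1 ≤ b}

theorem isLowerSet_standardExponents (a b : ℕ) : IsLowerSet (standardExponents a b) :=
  fun _ _ hed hd => ⟨(hed 1).trans hd.1, (add_le_add (hed 0) (hed 1)).trans hd.2⟩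

noncomputable def standardExponentsEquiv (a b : ℕ) :
    standardExponents a b ≃ {p ∈ range (b + 1) ×ˢ range (a + 1) | p.1 + p.2 ≤ b} :=
  (Finsupp.equivFunOnFinite.trans (finTwoArrowEquiv ℕ)).subtypeEquiv fun d => by
    change d 1 ≤ a ∧ d 0 + d 1 ≤ b ↔ (d 0, d 1) ∈ _
    simp only [mem_filter, mem_product, mem_range]
    omega

instance (a b : ℕ) : Finite (standardExponents a b) :=
  .of_equiv _ (standardExponentsEquiv a b).symm

theorem natCard_standardExponents {a b : ℕ} (hab : a ≤ b) :
    Nat.card (standardExponents a b) = (a + 1) * (b + 1) - a * (a + 1) / 2 := by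
  rw [Nat.card_congr (standardExponentsEquiv a b), Nat.card_eq_finsetCard,
    card_filter_add_le_product hab]

theorem monomial_one_eq_X_pow_mul_X_pow {R : Type*} [CommSemiring R] (d : Fin 2 →₀ ℕ) :
    monomial d (1 : R) = X 0 ^ d 0 * X 1 ^ d 1 := by
  rw [monomial_eq, C_1, one_mul, Finsupp.prod_fintype _ _ (by simp), Fin.prod_univ_two]

theorem setOf_X_pow_mul_X_pow_eq_image {R : Type*} [CommSemiring R] (a b : ℕ) :
    {p : MvPolynomial (Fin 2) R | ∃ k m : ℕ, (a < m ∨ b < k + m) ∧ p = X 0 ^ k * X 1 ^ m} =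
      (monomial · 1) '' (standardExponents a b)ᶜ := by
  ext p
  constructor
  · rintro ⟨k, m, hkm, rfl⟩
    refine ⟨Finsupp.single 0 k + Finsupp.single 1 m, ?_, ?_⟩
    · simp only [standardExponents, Set.mem_compl_iff, Set.mem_ofPred_eq, Finsupp.add_apply,
        Finsupp.single_eq_same, Finsupp.single_eq_of_ne one_ne_zero,
        Finsupp.single_eq_of_ne zero_ne_one]
      omega
    · simp [monomial_one_eq_X_pow_mul_X_pow]
  · rintro ⟨d, hd, rfl⟩
    refine ⟨d 0, d 1, ?_, monomial_one_eq_X_pow_mul_X_pow d⟩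
    simp only [standardExponents, Set.mem_compl_iff, Set.mem_ofPred_eq] at hd
    omega

theorem shearedPDeriv_monomial_mem {K : Type*} [Field K] {a b : ℕ} {d : Fin 2 →₀ ℕ}
    (hd : d ∈ standardExponents a b) :
    shearedPDeriv (monomial d (1 : K)) ∈ restrictSupport K (standardExponents a b) := by
  rw [shearedPDeriv_apply, pderiv_monomial (i := 1), X, monomial_mul]
  refine add_mem (pderiv_monomial_mem_restrictSupport (isLowerSet_standardExponents a b) hd _ _)
    ((monomial_mem_restrictSupport K).mpr ?_)
  by_cases h : d 1 = 0
  · simp [h]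
  · left
    simp only [standardExponents, Set.mem_ofPred_eq, Finsupp.add_apply, Finsupp.tsub_apply,
      Finsupp.single_eq_same, Finsupp.single_eq_of_ne one_ne_zero,
      Finsupp.single_eq_of_ne zero_ne_one] at hd ⊢
    omega

theorem stmt_12_general (K : Type*) [Field K] [CharZero K] (a b : ℕ) (hb : 2 * a ≤ b)
    (I : Ideal (MvPolynomial (Fin 2) K))
    (hI : I = Ideal.span {p | ∃ k m : ℕ, (a < m ∨ b < k + m) ∧ p = X 0 ^ k * X 1 ^ m})
    (D1 D2 : Module.End K (MvPolynomial (Fin 2) K ⧸ I))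
    (hD1 : ∀ k m : ℕ, m ≤ a → k + m ≤ b →
      D1 (Ideal.Quotient.mk I (X 0 ^ k * X 1 ^ m)) =
        Ideal.Quotient.mk I (pderiv 0 (X 0 ^ k * X 1 ^ m) + X 0 * pderiv 1 (X 0 ^ k * X 1 ^ m)))
    (hD2 : ∀ k m : ℕ, m ≤ a → k + m ≤ b →
      D2 (Ideal.Quotient.mk I (X 0 ^ k * X 1 ^ m)) =
        Ideal.Quotient.mk I (pderiv 1 (X 0 ^ k * X 1 ^ m))) :
    Module.finrank K (Algebra.adjoin K {D1, D2}) = (a + 1) * (b + 1) - a * (a + 1) / 2 ∧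
    Module.finrank K (Algebra.adjoin K {D1, D2})
      = Module.finrank K (MvPolynomial (Fin 2) K ⧸ I) := by
  set S := standardExponents a b
  have hI' : ∀ p, p ∈ I ↔ ∀ d ∈ p.support, d ∉ S := fun p => by
    rw [hI, setOf_X_pow_mul_X_pow_eq_image, mem_ideal_span_monomial_compl_iff
      (isLowerSet_standardExponents a b)]
  let e := restrictSupportEquivQuotient I hI'
  let Φ := (shear (K := K)).toLinearMap ∘ₗ (restrictSupport K S).subtype ∘ₗ e.symm.toLinearMap
  have hΦ : Function.Injective Φ :=
    shear_injective.comp (Subtype.val_injective.comp e.symm.injective)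
  have h₁ : Function.Semiconj Φ D1 (pderiv 0) :=
    semiconj_restrictSupportEquivQuotient_symm I hI' _ D1 shearedPDeriv.toLinearMap _
      (fun d hd => shearedPDeriv_monomial_mem hd)
      (fun d hd => by rw [monomial_one_eq_X_pow_mul_X_pow]; exact hD1 _ _ hd.1 hd.2)
      semiconj_shear_shearedPDeriv
  have h₂ : Function.Semiconj Φ D2 (pderiv 1) :=
    semiconj_restrictSupportEquivQuotient_symm I hI' _ D2 (pderiv 1).toLinearMap _
      (fun d hd => pderiv_monomial_mem_restrictSupport (isLowerSet_standardExponents a b) hd _ _)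
      (fun d hd => by rw [monomial_one_eq_X_pow_mul_X_pow]; exact hD2 _ _ hd.1 hd.2)
      semiconj_shear_pderiv_one
  have := finite_quotient_of_finite_exponents I hI'
  have hadjoin := finrank_adjoin_eq_of_semiconj_pderiv hΦ h₁ h₂
  refine ⟨?_, hadjoin⟩
  rw [hadjoin, finrank_quotient_eq_natCard I hI', natCard_standardExponents (by omega)]

/-- The subalgebra `A'_{a,b} = K[δ_1, δ_2] ⊆ End_K(A_{a,b})` has dimension
`(a+1)(b+1) − a(a+1)/2`, equal to `dim_K A_{a,b}`. -/
theorem stmt_12 (K : Type*) [Field K] [CharZero K] (a b : ℕ) (ha : 1 ≤ a) (hb : 2 * a ≤ b)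
    (I : Ideal (MvPolynomial (Fin 2) K))
    (hI : I = Ideal.span {p | ∃ k m : ℕ, (a < m ∨ b < k + m) ∧ p = X 0 ^ k * X 1 ^ m})
    (D1 D2 : Module.End K (MvPolynomial (Fin 2) K ⧸ I))
    (hD1 : ∀ k m : ℕ, m ≤ a → k + m ≤ b →
      D1 (Ideal.Quotient.mk I (X 0 ^ k * X 1 ^ m)) =
        Ideal.Quotient.mk I (pderiv 0 (X 0 ^ k * X 1 ^ m) + X 0 * pderiv 1 (X 0 ^ k * X 1 ^ m)))
    (hD2 : ∀ k m : ℕ, m ≤ a → k + m ≤ b →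
      D2 (Ideal.Quotient.mk I (X 0 ^ k * X 1 ^ m)) =
        Ideal.Quotient.mk I (pderiv 1 (X 0 ^ k * X 1 ^ m))) :
    Module.finrank K (Algebra.adjoin K {D1, D2}) = (a + 1) * (b + 1) - a * (a + 1) / 2 ∧
    Module.finrank K (Algebra.adjoin K {D1, D2})
      = Module.finrank K (MvPolynomial (Fin 2) K ⧸ I) :=
  stmt_12_general K a b hb I hI D1 D2 hD1 hD2
end

section
/- The K-algebra K[t,s]/(t^4, t^3 − ts, s^2) is isomorphic to the monomial algebra K[z,w]/(z^4, zw, w^2), via the change of variables z = t, w = s − t². -/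
/-!
The substitution `s ↦ s - t²` is a triangular, hence invertible, change of variables of
`K[t,s]`, and it carries `(t⁴, ts, s²)` onto `(t⁴, t³ - ts, s²)`:
`t (s - t²) = -(t³ - ts)` and `(s - t²)² = s² - t⁴ + 2t (t³ - ts)`, and conversely
`s² = (s - t²)² + 2t · t (s - t²) + t⁴`.
-/

open MvPolynomial

namespace MvPolynomial

variable {R : Type*} [CommRing R]

noncomputable def shear (q : Polynomial R) :
    MvPolynomial (Fin 2) R ≃ₐ[R] MvPolynomial (Fin 2) R :=
  AlgEquiv.ofAlgHom (aeval ![X 0, X 1 + Polynomial.aeval (X 0) q])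
    (aeval ![X 0, X 1 - Polynomial.aeval (X 0) q])
    (by ext i : 1; fin_cases i <;> simp [AlgHom.comp_apply, ← Polynomial.aeval_algHom_apply])
    (by ext i : 1; fin_cases i <;> simp [AlgHom.comp_apply, ← Polynomial.aeval_algHom_apply])

@[simp]
theorem shear_X_zero (q : Polynomial R) : shear q (X 0) = X 0 := by
  simp [shear]

@[simp]
theorem shear_X_one (q : Polynomial R) :
    shear q (X 1) = X 1 + Polynomial.aeval (X 0) q := by
  simp [shear]

theorem map_span_shear_neg_X_sq :
    (Ideal.span {X 0 ^ 4, X 0 * X 1, X 1 ^ 2} : Ideal (MvPolynomial (Fin 2) R)).map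
        (shear (-Polynomial.X ^ 2 : Polynomial R) :
          MvPolynomial (Fin 2) R →+* MvPolynomial (Fin 2) R) =
      Ideal.span {X 0 ^ 4, X 0 ^ 3 - X 0 * X 1, X 1 ^ 2} := by
  simp only [Ideal.map_span, Set.image_insert_eq, Set.image_singleton, RingHom.coe_coe, map_pow,
    map_mul, shear_X_zero, shear_X_one, map_neg, Polynomial.aeval_X, ← sub_eq_add_neg]
  apply le_antisymm <;> rw [Ideal.span_le] <;>
    simp only [Set.insert_subset_iff, Set.singleton_subset_iff, SetLike.mem_coe, Ideal.span,
      Submodule.mem_span_triple, smul_eq_mul]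
  · exact ⟨⟨1, 0, 0, by ring⟩, ⟨0, -1, 0, by ring⟩, ⟨-1, 2 * X 0, 1, by ring⟩⟩
  · exact ⟨⟨1, 0, 0, by ring⟩, ⟨0, -1, 0, by ring⟩, ⟨1, 2 * X 0, 1, by ring⟩⟩

end MvPolynomial

theorem stmt_13_general (K : Type*) [Field K]
    (J1 J2 : Ideal (MvPolynomial (Fin 2) K))
    (hJ1 : J1 = Ideal.span {X 0 ^ 4, X 0 * X 1, X 1 ^ 2})
    (hJ2 : J2 = Ideal.span {X 0 ^ 4, X 0 ^ 3 - X 0 * X 1, X 1 ^ 2}) :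
    ∃ φ : (MvPolynomial (Fin 2) K ⧸ J1) ≃ₐ[K] (MvPolynomial (Fin 2) K ⧸ J2),
      φ (Ideal.Quotient.mk J1 (X 0)) = Ideal.Quotient.mk J2 (X 0) ∧
      φ (Ideal.Quotient.mk J1 (X 1)) = Ideal.Quotient.mk J2 (X 1 - X 0 ^ 2) := by
  refine ⟨Ideal.quotientEquivAlg J1 J2 (shear (-Polynomial.X ^ 2))
    (by rw [hJ1, hJ2, map_span_shear_neg_X_sq]), ?_, ?_⟩ <;>
  simp [sub_eq_add_neg]

/-- `K[t,s]/(t⁴, t³ − ts, s²) ≅ K[z,w]/(z⁴, zw, w²)` via `z = t`, `w = s − t²`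
(here `t = X 0`, `s = X 1` and `z = X 0`, `w = X 1`). -/
theorem stmt_13 (K : Type*) [Field K] [CharZero K]
    (J1 J2 : Ideal (MvPolynomial (Fin 2) K))
    (hJ1 : J1 = Ideal.span {X 0 ^ 4, X 0 * X 1, X 1 ^ 2})
    (hJ2 : J2 = Ideal.span {X 0 ^ 4, X 0 ^ 3 - X 0 * X 1, X 1 ^ 2}) :
    ∃ φ : (MvPolynomial (Fin 2) K ⧸ J1) ≃ₐ[K] (MvPolynomial (Fin 2) K ⧸ J2),
      φ (Ideal.Quotient.mk J1 (X 0)) = Ideal.Quotient.mk J2 (X 0) ∧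
      φ (Ideal.Quotient.mk J1 (X 1)) = Ideal.Quotient.mk J2 (X 1 - X 0 ^ 2) :=
  stmt_13_general K J1 J2 hJ1 hJ2
end

section
/- The Hilbert–Samuel sequence of the local K-algebra A = K[t,s]/(t^5, t^4 − t^2 s, s^2) with maximal ideal m = (t,s) is (1, 2, 2, 1, 1), i.e., dim_K m^0/m^1 = 1, dim_K m/m^2 = 2, dim_K m^2/m^3 = 2, dim_K m^3/m^4 = 1, dim_K m^4/m^5 = 1, and m^5 = 0. -/
/-!
The monomials `1, t, s, t², ts, t³, t⁴` form a `K`-basis of `A`, and `mᶦ` is spanned by those of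
total degree `≥ i`. Indeed the relations give `t²s = t⁴` and `t³s = 0`, so every other monomial
`tᵃsᶜ` is `0` or `t⁴`, which has degree `≥ a + c`; hence the span of the standard monomials of
degree `≥ i` is an ideal, and induction on `i` identifies it with `mᶦ`. Counting standard
monomials by degree gives `(1, 2, 2, 1, 1, 0, …)`. Their linear independence is checked in
`K[ξ]/(ξ⁴)[ε]/(ε²)`, where `t ↦ ξ + ε`, `s ↦ 4ξε` satisfy the relations and the images
`1, ξ + ε, 4ξε, ξ² + 2ξε, 4ξ²ε, ξ³ + 3ξ²ε, 4ξ³ε` are visibly independent.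
-/

open MvPolynomial

open Module Submodule in
theorem finrank_map_mkQ_add_finrank {K V : Type*} [Field K] [AddCommGroup V] [Module K V]
    {W U : Submodule K V} [FiniteDimensional K U] (h : W ≤ U) :
    finrank K (U.map W.mkQ) + finrank K W = finrank K U := by
  have := (W.mkQ.domRestrict U).finrank_range_add_finrank_ker
  rwa [LinearMap.range_domRestrict, LinearMap.ker_domRestrict, ker_mkQ,
    (comapSubtypeEquivOfLe h).finrank_eq] at this

open Module Submodule in
theorem finrank_map_mkQ_span_image {K V ι : Type*} [Field K] [AddCommGroup V] [Module K V]
    {v : ι → V} {s t : Finset ι} (hv : LinearIndepOn K v s) (hts : t ⊆ s) :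
    finrank K ((span K (v '' s)).map (span K (v '' t)).mkQ) = s.card - t.card := by
  classical
  have finrank_span : ∀ u ⊆ s, finrank K (span K (v '' u)) = u.card := fun u hu => by
    rw [← Finset.coe_image, finrank_span_finset_eq_card ((hv.mono hu).id_image.mono (by simp)),
      Finset.card_image_of_injOn (hv.mono hu).injOn]
  have : FiniteDimensional K (span K (v '' s)) :=
    FiniteDimensional.span_of_finite K (s.finite_toSet.image v)
  have := finrank_map_mkQ_add_finrank
    (span_mono (R := K) (Set.image_mono (f := v) (Finset.coe_subset.2 hts)))
  rw [finrank_span s le_rfl, finrank_span t hts] at this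
  omega

namespace HilbertSamuelExample

noncomputable section

variable (K : Type*) [Field K]

abbrev relations : Ideal (MvPolynomial (Fin 2) K) :=
  Ideal.span {X 0 ^ 5, X 0 ^ 4 - X 0 ^ 2 * X 1, X 1 ^ 2}

abbrev Alg : Type _ := MvPolynomial (Fin 2) K ⧸ relations K

def t : Alg K := Ideal.Quotient.mk _ (X 0)

def s : Alg K := Ideal.Quotient.mk _ (X 1)

abbrev maxIdeal : Ideal (Alg K) := Ideal.span {t K, s K}

def monom (e : ℕ × ℕ) : Alg K := t K ^ e.1 * s K ^ e.2

def standardExponents : Finset (ℕ × ℕ) := {(0, 0), (1, 0), (0, 1), (2, 0), (1, 1), (3, 0), (4, 0)}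

def standardExponentsFrom (i : ℕ) : Finset (ℕ × ℕ) :=
  standardExponents.filter fun e => i ≤ e.1 + e.2

def filtration (i : ℕ) : Submodule K (Alg K) :=
  Submodule.span K (monom K '' standardExponentsFrom i)

lemma t_pow_five : t K ^ 5 = 0 :=
  Ideal.Quotient.eq_zero_iff_mem.2 (Ideal.subset_span (by simp))

lemma s_sq : s K ^ 2 = 0 :=
  Ideal.Quotient.eq_zero_iff_mem.2 (Ideal.subset_span (by simp))

lemma t_sq_mul_s : t K ^ 2 * s K = t K ^ 4 :=
  (Ideal.Quotient.mk_eq_mk_iff_sub_mem _ _).2 <| by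
    rw [← neg_mem_iff, neg_sub]
    exact Ideal.subset_span (by simp)

lemma t_pow_three_mul_s : t K ^ 3 * s K = 0 := by
  rw [pow_succ', mul_assoc, t_sq_mul_s, ← pow_succ', t_pow_five]

variable {K}

lemma filtration_antitone : Antitone (filtration K) := fun _ _ hij =>
  Submodule.span_mono <| Set.image_mono fun _ he => by
    simp only [standardExponentsFrom, Finset.coe_filter, Set.mem_ofPred_eq] at he ⊢
    exact ⟨he.1, hij.trans he.2⟩

lemma monom_mem_filtration_of_mem {e : ℕ × ℕ} {i : ℕ} (he : e ∈ standardExponents)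
    (hi : i ≤ e.1 + e.2) : monom K e ∈ filtration K i :=
  Submodule.subset_span ⟨e, by simpa [standardExponentsFrom] using ⟨he, hi⟩, rfl⟩

lemma monom_mem_filtration : ∀ a c : ℕ, monom K (a, c) ∈ filtration K (a + c)
  | 0, 0 | 1, 0 | 2, 0 | 3, 0 | 4, 0 | 0, 1 | 1, 1 =>
    monom_mem_filtration_of_mem (by decide) le_rfl
  | 2, 1 => by
    have : monom K (2, 1) = monom K (4, 0) := by simp [monom, t_sq_mul_s]
    exact this ▸ monom_mem_filtration_of_mem (by decide) (by norm_num)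
  | a + 5, 0 => by simp [monom, pow_add, t_pow_five]
  | a + 3, 1 => by simp [monom, pow_add, mul_assoc, t_pow_three_mul_s]
  | a, c + 2 => by simp [monom, pow_add, s_sq]

lemma monom_mul_monom (e f : ℕ × ℕ) : monom K e * monom K f = monom K (e + f) := by
  simp only [monom, Prod.fst_add, Prod.snd_add, pow_add]
  ring

lemma monom_mul_mem_filtration (e : ℕ × ℕ) {i : ℕ} {x : Alg K} (hx : x ∈ filtration K i) :
    monom K e * x ∈ filtration K (e.1 + e.2 + i) := by
  induction hx using Submodule.span_induction with
  | mem y hy =>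
    obtain ⟨f, hf, rfl⟩ := hy
    rw [monom_mul_monom]
    refine filtration_antitone ?_ (monom_mem_filtration (e + f).1 (e + f).2)
    have := (Finset.mem_filter.1 hf).2
    simp only [Prod.fst_add, Prod.snd_add]
    omega
  | zero => rw [mul_zero]; exact zero_mem _
  | add y z _ _ hy hz => simpa [mul_add] using add_mem hy hz
  | smul a y _ hy => simpa [mul_smul_comm] using Submodule.smul_mem _ a hy

lemma mk_monomial (d : Fin 2 →₀ ℕ) (r : K) :
    Ideal.Quotient.mk (relations K) (monomial d r) = r • monom K (d 0, d 1) := by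
  rw [monomial_eq, Finsupp.prod_fintype _ _ (by simp), Fin.prod_univ_two, C_mul',
    ← Ideal.Quotient.mkₐ_eq_mk K, map_smul]
  simp [monom, t, s]

lemma mul_mem_filtration (a : Alg K) {i : ℕ} {x : Alg K} (hx : x ∈ filtration K i) :
    a * x ∈ filtration K i := by
  obtain ⟨p, rfl⟩ := Ideal.Quotient.mk_surjective a
  induction p using MvPolynomial.induction_on' with
  | monomial d r =>
    rw [mk_monomial, smul_mul_assoc]
    exact Submodule.smul_mem _ r (filtration_antitone (by omega) (monom_mul_mem_filtration _ hx))
  | add p q hp hq => simpa [add_mul] using add_mem hp hq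

lemma filtration_zero : filtration K 0 = ⊤ :=
  eq_top_iff.2 fun a _ => by
    simpa [monom] using mul_mem_filtration a (monom_mem_filtration (K := K) 0 0)

lemma restrictScalars_maxIdeal_pow (i : ℕ) :
    (maxIdeal K ^ i).restrictScalars K = filtration K i := by
  induction i with
  | zero => simp [filtration_zero]
  | succ i ih =>
    refine le_antisymm (fun z hz => ?_) (Submodule.span_le.2 ?_)
    · rw [Submodule.restrictScalars_mem, Submodule.pow_succ] at hz
      refine Submodule.mul_induction_on hz (fun x hx y hy => ?_) (fun _ _ => add_mem)
      rw [← Submodule.restrictScalars_mem K, ih] at hx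
      obtain ⟨a, b, rfl⟩ := Ideal.mem_span_pair.1 hy
      have ht : t K * x ∈ filtration K (i + 1) := by
        simpa [monom, add_comm] using monom_mul_mem_filtration (1, 0) hx
      have hs : s K * x ∈ filtration K (i + 1) := by
        simpa [monom, add_comm] using monom_mul_mem_filtration (0, 1) hx
      rw [show x * (a * t K + b * s K) = a * (t K * x) + b * (s K * x) by ring]
      exact add_mem (mul_mem_filtration a ht) (mul_mem_filtration b hs)
    · rintro _ ⟨e, he, rfl⟩
      have hmem : monom K e ∈ maxIdeal K ^ (e.1 + e.2) := by
        -- the ascription makes `rw` see the ideal power through the `Monoid` instance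
        rw [monom, (pow_add (maxIdeal K) e.1 e.2 :)]
        exact Ideal.mul_mem_mul (Ideal.pow_mem_pow (Ideal.subset_span (by simp)) _)
          (Ideal.pow_mem_pow (Ideal.subset_span (by simp)) _)
      exact Ideal.pow_le_pow_right (Finset.mem_filter.1 he).2 hmem

variable (K)

abbrev TruncPoly : Type _ := AdjoinRoot (Polynomial.X ^ 4 : Polynomial K)

abbrev Model : Type _ := DualNumber (TruncPoly K)

def ξ : TruncPoly K := AdjoinRoot.root _

def modelT : Model K := TrivSqZeroExt.inl (ξ K) + TrivSqZeroExt.inr 1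

def modelS : Model K := TrivSqZeroExt.inr ((4 : K) • ξ K)

lemma ξ_pow_four : ξ K ^ 4 = 0 := by
  rw [ξ, ← AdjoinRoot.mk_X, ← map_pow, AdjoinRoot.mk_self]

lemma linearIndependent_ξ_pow : LinearIndependent K fun i : Fin 4 => ξ K ^ (i : ℕ) := by
  have hdeg : (minpoly K (ξ K)).natDegree = 4 := by
    rw [ξ, AdjoinRoot.minpoly_root (pow_ne_zero 4 Polynomial.X_ne_zero)]
    simp
  exact (linearIndependent_pow (ξ K)).comp (Fin.cast hdeg.symm) (Fin.cast_injective _)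

variable {K} in
lemma eq_zero_of_ξ_pow_combination {a b c d : K}
    (h : a • 1 + b • ξ K + c • ξ K ^ 2 + d • ξ K ^ 3 = 0) : a = 0 ∧ b = 0 ∧ c = 0 ∧ d = 0 := by
  have := Fintype.linearIndependent_iff.1 (linearIndependent_ξ_pow K) ![a, b, c, d]
    (by simpa [Fin.sum_univ_four] using h)
  exact ⟨this 0, this 1, this 2, this 3⟩

lemma modelT_pow (n : ℕ) :
    modelT K ^ n = TrivSqZeroExt.inl (ξ K ^ n) + TrivSqZeroExt.inr ((n : K) • ξ K ^ (n - 1)) := by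
  ext
  · simp only [modelT, TrivSqZeroExt.fst_pow, TrivSqZeroExt.fst_add, TrivSqZeroExt.fst_inl,
      TrivSqZeroExt.fst_inr, add_zero]
  · simp only [modelT, TrivSqZeroExt.snd_pow, TrivSqZeroExt.fst_add, TrivSqZeroExt.fst_inl,
      TrivSqZeroExt.fst_inr, TrivSqZeroExt.snd_add, TrivSqZeroExt.snd_inl, TrivSqZeroExt.snd_inr,
      add_zero, zero_add, smul_eq_mul, mul_one, Nat.cast_smul_eq_nsmul, Nat.pred_eq_sub_one]

lemma modelT_pow_mul_modelS (n : ℕ) :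
    modelT K ^ n * modelS K = TrivSqZeroExt.inr ((4 : K) • ξ K ^ (n + 1)) := by
  rw [modelT_pow, modelS, add_mul, TrivSqZeroExt.inl_mul_inr, TrivSqZeroExt.inr_mul_inr, add_zero,
    smul_eq_mul, mul_smul_comm, ← pow_succ]

lemma modelS_sq : modelS K ^ 2 = 0 := by
  rw [sq, modelS, TrivSqZeroExt.inr_mul_inr]

lemma modelT_pow_five : modelT K ^ 5 = 0 := by
  have hx5 : ξ K ^ 5 = 0 := by rw [pow_succ, ξ_pow_four, zero_mul]
  rw [modelT_pow]
  norm_num [hx5, ξ_pow_four]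

lemma modelT_pow_four_eq : modelT K ^ 4 = modelT K ^ 2 * modelS K := by
  rw [modelT_pow, modelT_pow_mul_modelS, ξ_pow_four]
  norm_num

lemma relations_le_ker_aeval :
    relations K ≤ RingHom.ker (aeval (R := K) ![modelT K, modelS K]) := by
  rw [Ideal.span_le]
  rintro _ (rfl | rfl | rfl) <;> simp [modelT_pow_five, modelT_pow_four_eq, modelS_sq]

def toModel : Alg K →ₐ[K] Model K :=
  Ideal.Quotient.liftₐ _ (aeval ![modelT K, modelS K]) fun _ hp => relations_le_ker_aeval K hp

lemma toModel_t : toModel K (t K) = modelT K :=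
  aeval_X (R := K) ![modelT K, modelS K] 0

lemma toModel_s : toModel K (s K) = modelS K :=
  aeval_X (R := K) ![modelT K, modelS K] 1

lemma toModel_monom_zero (n : ℕ) : toModel K (monom K (n, 0)) =
    TrivSqZeroExt.inl (ξ K ^ n) + TrivSqZeroExt.inr ((n : K) • ξ K ^ (n - 1)) := by
  rw [monom, pow_zero, mul_one, map_pow, toModel_t, modelT_pow]

lemma toModel_monom_one (n : ℕ) :
    toModel K (monom K (n, 1)) = TrivSqZeroExt.inr ((4 : K) • ξ K ^ (n + 1)) := by
  rw [monom, pow_one, map_mul, map_pow, toModel_t, toModel_s, modelT_pow_mul_modelS]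

lemma linearIndepOn_monom [CharZero K] : LinearIndepOn K (monom K) standardExponents := by
  refine LinearIndepOn.of_comp (toModel K).toLinearMap (linearIndepOn_finset_iff.2 fun f hf => ?_)
  simp (disch := decide) only [standardExponents, Finset.sum_insert, Finset.sum_singleton,
    Function.comp_apply, AlgHom.toLinearMap_apply, toModel_monom_zero, toModel_monom_one] at hf
  have h1 := congrArg TrivSqZeroExt.fst hf
  have h2 := congrArg TrivSqZeroExt.snd hf
  norm_num [ξ_pow_four] at h1 h2
  obtain ⟨h00, h10, h20, h30⟩ :=
    eq_zero_of_ξ_pow_combination (by linear_combination (norm := module) h1)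
  rw [h10, h20, h30] at h2
  obtain ⟨-, h01, h11, h40⟩ := eq_zero_of_ξ_pow_combination (a := 0) (b := 4 * f (0, 1))
    (c := 4 * f (1, 1)) (d := 4 * f (4, 0)) (by linear_combination (norm := module) h2)
  simp only [mul_eq_zero, OfNat.ofNat_ne_zero, false_or] at h01 h11 h40
  intro e he
  simp only [standardExponents, Finset.mem_insert, Finset.mem_singleton] at he
  rcases he with rfl | rfl | rfl | rfl | rfl | rfl | rfl <;> assumption

lemma finrank_filtration_quotient [CharZero K] (i : ℕ) :
    Module.finrank K ((filtration K i).map (filtration K (i + 1)).mkQ) =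
      (standardExponentsFrom i).card - (standardExponentsFrom (i + 1)).card :=
  finrank_map_mkQ_span_image ((linearIndepOn_monom K).mono (Finset.filter_subset _ _))
    (Finset.monotone_filter_right _ fun _ _ => Nat.le_of_succ_le)

lemma maxIdeal_pow_five : maxIdeal K ^ 5 = ⊥ := by
  apply Submodule.restrictScalars_injective K
  rw [restrictScalars_maxIdeal_pow, Submodule.restrictScalars_bot, filtration,
    show standardExponentsFrom 5 = ∅ by decide, Finset.coe_empty, Set.image_empty,
    Submodule.span_empty]

end

end HilbertSamuelExample

open HilbertSamuelExample in
/-- The Hilbert–Samuel sequence of `A = K[t,s]/(t⁵, t⁴ − t²s, s²)` with maximal ideal `m = (t,s)`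
is `(1, 2, 2, 1, 1)`, and `m⁵ = 0`. -/
theorem stmt_15 (K : Type*) [Field K] [CharZero K]
    (I : Ideal (MvPolynomial (Fin 2) K))
    (hI : I = Ideal.span {X 0 ^ 5, X 0 ^ 4 - X 0 ^ 2 * X 1, X 1 ^ 2})
    (m : Ideal (MvPolynomial (Fin 2) K ⧸ I))
    (hm : m = Ideal.span {Ideal.Quotient.mk I (X 0), Ideal.Quotient.mk I (X 1)})
    (HS : ℕ → ℕ)
    (hHS : ∀ i : ℕ, HS i = Module.finrank K
      (Submodule.map (((m ^ (i + 1)).restrictScalars K).mkQ)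
        ((m ^ i).restrictScalars K))) :
    HS 0 = 1 ∧ HS 1 = 2 ∧ HS 2 = 2 ∧ HS 3 = 1 ∧ HS 4 = 1 ∧ m ^ 5 = ⊥ := by
  subst hI
  obtain rfl : m = maxIdeal K := hm
  have hHS' (i : ℕ) :
      HS i = (standardExponentsFrom i).card - (standardExponentsFrom (i + 1)).card := by
    rw [hHS, restrictScalars_maxIdeal_pow, restrictScalars_maxIdeal_pow,
      finrank_filtration_quotient]
  refine ⟨?_, ?_, ?_, ?_, ?_, maxIdeal_pow_five K⟩ <;> rw [hHS'] <;> decide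
end

section
/- The local algebra K[t,s]/(t^5, t^4 − t^2s, s^2) is not isomorphic to K[z,w]/(z^5, z^2w, w^2): for any algebra map φ with φ(s)² = 0 one must have φ(s) ∈ Kw + (z³, z⁴)-span, which forces φ(t²s) = 0 while φ(t⁴) ≠ 0 for any φ inducing an isomorphism, contradicting t⁴ = t²s. -/
open MvPolynomial

section Aux

variable {K : Type*} [Field K] [CharZero K]

/-- The map `K[z,w] → K[X]` sending `z ↦ X`, `w ↦ 0`. -/
noncomputable def auxPi (K : Type*) [Field K] : MvPolynomial (Fin 2) K →ₐ[K] Polynomial K :=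
  aeval ![Polynomial.X, 0]

/-- The section `K[X] → K[z,w]` sending `X ↦ z`. -/
noncomputable def auxSig (K : Type*) [Field K] : Polynomial K →ₐ[K] MvPolynomial (Fin 2) K :=
  Polynomial.aeval (X 0)

lemma auxPi_X0 : auxPi K (X 0) = Polynomial.X := by simp [auxPi]

lemma auxPi_X1 : auxPi K (X 1) = 0 := by simp [auxPi]

lemma aux_sub_mem (r : MvPolynomial (Fin 2) K) :
    r - auxSig K (auxPi K r) ∈ Ideal.span {(X 1 : MvPolynomial (Fin 2) K)} := by
  induction r using MvPolynomial.induction_on with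
  | C a => simp [auxPi, auxSig]
  | add p q hp hq =>
      have : p + q - auxSig K (auxPi K (p + q)) =
          (p - auxSig K (auxPi K p)) + (q - auxSig K (auxPi K q)) := by
        rw [map_add, map_add]; ring
      rw [this]; exact add_mem hp hq
  | mul_X p n hp =>
      fin_cases n
      · show p * X 0 - auxSig K (auxPi K (p * X 0)) ∈ _
        have : p * X 0 - auxSig K (auxPi K (p * X 0)) =
            (p - auxSig K (auxPi K p)) * X 0 := by
          rw [map_mul, map_mul, auxPi_X0]
          have : auxSig K Polynomial.X = X 0 := by simp [auxSig]
          rw [this]; ring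
        rw [this]
        exact Ideal.mul_mem_right _ _ hp
      · show p * X 1 - auxSig K (auxPi K (p * X 1)) ∈ _
        have : p * X 1 - auxSig K (auxPi K (p * X 1)) = p * X 1 := by
          rw [map_mul, auxPi_X1, mul_zero, map_zero, sub_zero]
        rw [this]
        exact Ideal.mul_mem_left _ _ (Ideal.subset_span rfl)

lemma aux_mem_span_X (r : MvPolynomial (Fin 2) K) (h : constantCoeff r = 0) :
    r ∈ Ideal.span {(X 0 : MvPolynomial (Fin 2) K), X 1} := by
  have key : ∀ r : MvPolynomial (Fin 2) K,
      r - C (constantCoeff r) ∈ Ideal.span {(X 0 : MvPolynomial (Fin 2) K), X 1} := by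
    intro r
    induction r using MvPolynomial.induction_on with
    | C a => simp
    | add p q hp hq =>
        have : p + q - C (constantCoeff (p + q)) =
            (p - C (constantCoeff p)) + (q - C (constantCoeff q)) := by
          rw [map_add, C_add]; ring
        rw [this]; exact add_mem hp hq
    | mul_X p n hp =>
        have : p * X n - C (constantCoeff (p * X n)) = p * X n := by
          simp
        rw [this]
        fin_cases n
        · exact Ideal.mul_mem_left _ _ (Ideal.subset_span (Set.mem_insert _ _))
        · exact Ideal.mul_mem_left _ _
            (Ideal.subset_span (Set.mem_insert_of_mem _ rfl))
  have := key r
  rwa [h, map_zero, sub_zero] at this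

lemma aux_X_pow_three_dvd {q : Polynomial K} (h : Polynomial.X ^ 5 ∣ q * q) :
    Polynomial.X ^ 3 ∣ q := by
  by_cases hq : q = 0
  · simp [hq]
  · have hqq : q * q ≠ 0 := mul_ne_zero hq hq
    have h5 : 5 ≤ Polynomial.rootMultiplicity 0 (q * q) := by
      rw [Polynomial.le_rootMultiplicity_iff hqq]
      simpa using h
    rw [Polynomial.rootMultiplicity_mul hqq] at h5
    have h3 : 3 ≤ Polynomial.rootMultiplicity 0 q := by omega
    have d1 : Polynomial.X ^ 3 ∣
        (Polynomial.X - Polynomial.C (0 : K)) ^ Polynomial.rootMultiplicity 0 q := by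
      simpa using pow_dvd_pow (Polynomial.X : Polynomial K) h3
    exact d1.trans (Polynomial.pow_rootMultiplicity_dvd q 0)

lemma aux_sq_mem {p : MvPolynomial (Fin 2) K}
    (h : p * p ∈ Ideal.span {(X 0 : MvPolynomial (Fin 2) K) ^ 5, X 0 ^ 2 * X 1, X 1 ^ 2}) :
    p ∈ Ideal.span {(X 1 : MvPolynomial (Fin 2) K), X 0 ^ 3} := by
  rw [Ideal.mem_span_insert] at h
  obtain ⟨a, z, hz, hpz⟩ := h
  rw [Ideal.mem_span_pair] at hz
  obtain ⟨b, c, hbc⟩ := hz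
  have hdvd : Polynomial.X ^ 5 ∣ auxPi K p * auxPi K p := by
    refine ⟨auxPi K a, ?_⟩
    have := congrArg (auxPi K) hpz
    rw [map_mul, map_add] at this
    rw [this, ← hbc]
    simp [map_add, map_mul, map_pow, auxPi_X0, auxPi_X1, mul_comm]
  obtain ⟨h', hh'⟩ := aux_X_pow_three_dvd hdvd
  have hmem1 : p - auxSig K (auxPi K p) ∈
      Ideal.span {(X 1 : MvPolynomial (Fin 2) K), X 0 ^ 3} := by
    refine Ideal.span_mono ?_ (aux_sub_mem p)
    intro x hx; rcases hx with rfl; exact Set.mem_insert _ _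
  have hmem2 : auxSig K (auxPi K p) ∈
      Ideal.span {(X 1 : MvPolynomial (Fin 2) K), X 0 ^ 3} := by
    rw [hh', map_mul, map_pow]
    have : auxSig K Polynomial.X = X 0 := by simp [auxSig]
    rw [this]
    exact Ideal.mul_mem_right _ _
      (Ideal.subset_span (Set.mem_insert_of_mem _ rfl))
  have : p = (p - auxSig K (auxPi K p)) + auxSig K (auxPi K p) := by ring
  rw [this]
  exact add_mem hmem1 hmem2

lemma aux_prod_mem {p q : MvPolynomial (Fin 2) K}
    (hp : p ∈ Ideal.span {(X 1 : MvPolynomial (Fin 2) K), X 0 ^ 3})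
    (hq : q ∈ Ideal.span {(X 0 : MvPolynomial (Fin 2) K), X 1}) :
    p * (q * q) ∈ Ideal.span {(X 0 : MvPolynomial (Fin 2) K) ^ 5, X 0 ^ 2 * X 1, X 1 ^ 2} := by
  rw [Ideal.mem_span_pair] at hp hq
  obtain ⟨a, b, hab⟩ := hp
  obtain ⟨c, d, hcd⟩ := hq
  have key : p * (q * q) =
      (b * c * c) * (X 0 ^ 5)
      + (a * c * c + 2 * b * c * d * X 0 ^ 2) * (X 0 ^ 2 * X 1)
      + (2 * a * c * d * X 0 + a * d * d * X 1 + b * d * d * X 0 ^ 3) * (X 1 ^ 2) := by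
    rw [← hab, ← hcd]; ring
  rw [key]
  refine add_mem (add_mem ?_ ?_) ?_
  · exact Ideal.mul_mem_left _ _ (Ideal.subset_span (Set.mem_insert _ _))
  · exact Ideal.mul_mem_left _ _
      (Ideal.subset_span (Set.mem_insert_of_mem _ (Set.mem_insert _ _)))
  · exact Ideal.mul_mem_left _ _
      (Ideal.subset_span (Set.mem_insert_of_mem _ (Set.mem_insert_of_mem _ rfl)))

lemma aux_X04_mono : (X 0 ^ 4 : MvPolynomial (Fin 2) K) = monomial (Finsupp.single 0 4) 1 :=
  X_pow_eq_monomial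

lemma aux_X05_mono : (X 0 ^ 5 : MvPolynomial (Fin 2) K) = monomial (Finsupp.single 0 5) 1 :=
  X_pow_eq_monomial

lemma aux_X12_mono : (X 1 ^ 2 : MvPolynomial (Fin 2) K) = monomial (Finsupp.single 1 2) 1 :=
  X_pow_eq_monomial

lemma aux_X021_mono : (X 0 ^ 2 * X 1 : MvPolynomial (Fin 2) K)
    = monomial (Finsupp.single 0 2 + Finsupp.single 1 1) 1 := by
  rw [X_pow_eq_monomial, X, monomial_mul, one_mul]

lemma aux_not_mem :
    (X 0 ^ 4 : MvPolynomial (Fin 2) K) ∉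
      Ideal.span {(X 0 : MvPolynomial (Fin 2) K) ^ 5, X 0 ^ 4 - X 0 ^ 2 * X 1, X 1 ^ 2} := by
  intro h
  rw [Ideal.mem_span_insert] at h
  obtain ⟨a, z, hz, heq⟩ := h
  rw [Ideal.mem_span_pair] at hz
  obtain ⟨b, c, hbc⟩ := hz
  rw [← hbc] at heq
  -- heq : X 0 ^ 4 = a * X 0 ^ 5 + (b * (X 0 ^ 4 - X 0 ^ 2 * X 1) + c * X 1 ^ 2)
  have h1 := congrArg (coeff (Finsupp.single 0 4)) heq
  have h2 := congrArg (coeff (Finsupp.single 0 2 + Finsupp.single 1 1)) heq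
  have hle1 : ¬ (Finsupp.single (0 : Fin 2) 5 ≤ Finsupp.single 0 4) := by
    rw [Finsupp.le_def]; push_neg
    exact ⟨0, by simp [Finsupp.single_apply]⟩
  have hle2 : ¬ (Finsupp.single (0 : Fin 2) 5 ≤ Finsupp.single 0 2 + Finsupp.single 1 1) := by
    rw [Finsupp.le_def]; push_neg
    exact ⟨0, by simp [Finsupp.single_apply]⟩
  have hle3 : ¬ (Finsupp.single (0 : Fin 2) 4 ≤ Finsupp.single 0 2 + Finsupp.single 1 1) := by
    rw [Finsupp.le_def]; push_neg
    exact ⟨0, by simp [Finsupp.single_apply]⟩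
  have hle4 : ¬ ((Finsupp.single (0 : Fin 2) 2 + Finsupp.single 1 1) ≤ Finsupp.single 0 4) := by
    rw [Finsupp.le_def]; push_neg
    exact ⟨1, by simp [Finsupp.single_apply]⟩
  have hle5 : ¬ (Finsupp.single (1 : Fin 2) 2 ≤ Finsupp.single 0 4) := by
    rw [Finsupp.le_def]; push_neg
    exact ⟨1, by simp [Finsupp.single_apply]⟩
  have hle6 : ¬ (Finsupp.single (1 : Fin 2) 2 ≤ Finsupp.single 0 2 + Finsupp.single 1 1) := by
    rw [Finsupp.le_def]; push_neg
    exact ⟨1, by simp [Finsupp.single_apply]⟩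
  rw [mul_sub] at h1 h2
  simp only [coeff_add, coeff_sub, aux_X04_mono, aux_X05_mono, aux_X12_mono, aux_X021_mono,
    coeff_mul_monomial', coeff_monomial, hle1, hle2, hle3, hle4, hle5, hle6,
    if_true, if_false, if_neg, if_pos, le_refl, tsub_self, mul_one] at h1 h2
  have hne : (Finsupp.single (0 : Fin 2) 4) ≠ Finsupp.single 0 2 + Finsupp.single 1 1 := by
    intro hcontra
    have := DFunLike.congr_fun hcontra 1
    simp [Finsupp.single_apply] at this
  rw [if_neg hne] at h2
  simp only [zero_add, add_zero, sub_zero, zero_sub] at h1 h2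
  rw [eq_comm, neg_eq_zero] at h2
  rw [h2] at h1
  exact one_ne_zero h1

end Aux

/-- `K[t,s]/(t⁵, t⁴ − t²s, s²)` is not isomorphic to `K[z,w]/(z⁵, z²w, w²)`: in the source
`t⁴ = t²s` holds, but any isomorphism would force `φ(t²s) = 0` while `φ(t⁴) ≠ 0`. -/
theorem stmt_17 (K : Type*) [Field K] [CharZero K]
    (I : Ideal (MvPolynomial (Fin 2) K))
    (hI : I = Ideal.span {X 0 ^ 5, X 0 ^ 4 - X 0 ^ 2 * X 1, X 1 ^ 2})
    (J : Ideal (MvPolynomial (Fin 2) K))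
    (hJ : J = Ideal.span {X 0 ^ 5, X 0 ^ 2 * X 1, X 1 ^ 2}) :
    IsEmpty ((MvPolynomial (Fin 2) K ⧸ I) ≃ₐ[K] (MvPolynomial (Fin 2) K ⧸ J)) := by
  constructor
  intro e
  obtain ⟨p, hp⟩ := Ideal.Quotient.mk_surjective (e (Ideal.Quotient.mk I (X 1)))
  obtain ⟨q, hq⟩ := Ideal.Quotient.mk_surjective (e (Ideal.Quotient.mk I (X 0)))
  -- p * p ∈ J
  have hmul : ∀ u v : MvPolynomial (Fin 2) K,
      Ideal.Quotient.mk J (u * v) = Ideal.Quotient.mk J u * Ideal.Quotient.mk J v :=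
    fun u v => map_mul _ u v
  have hs2 : Ideal.Quotient.mk I ((X 1 : MvPolynomial (Fin 2) K) ^ 2) = 0 := by
    rw [Ideal.Quotient.eq_zero_iff_mem, hI]
    exact Ideal.subset_span (Set.mem_insert_of_mem _ (Set.mem_insert_of_mem _ rfl))
  have hp2 : p * p ∈ J := by
    rw [← Ideal.Quotient.eq_zero_iff_mem, hmul, hp, ← map_mul, ← map_mul,
      show (X 1 : MvPolynomial (Fin 2) K) * X 1 = X 1 ^ 2 by ring, hs2, map_zero]
  have ht5 : Ideal.Quotient.mk I ((X 0 : MvPolynomial (Fin 2) K) ^ 5) = 0 := by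
    rw [Ideal.Quotient.eq_zero_iff_mem, hI]
    exact Ideal.subset_span (Set.mem_insert _ _)
  have hq5 : q ^ 5 ∈ J := by
    rw [← Ideal.Quotient.eq_zero_iff_mem, map_pow, hq, ← map_pow, ← map_pow, ht5]
    simp
  have hJker : J ≤ RingHom.ker (constantCoeff (R := K) (σ := Fin 2)) := by
    rw [hJ, Ideal.span_le]
    rintro x hx
    simp only [Set.mem_insert_iff, Set.mem_singleton_iff] at hx
    rcases hx with rfl | rfl | rfl <;> simp [RingHom.mem_ker]
  have hq0 : constantCoeff q = 0 := by
    have : (constantCoeff q) ^ 5 = 0 := by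
      have := hJker hq5
      rwa [RingHom.mem_ker, map_pow] at this
    exact pow_eq_zero_iff (by norm_num) |>.mp this
  -- memberships
  have hpm : p ∈ Ideal.span {(X 1 : MvPolynomial (Fin 2) K), X 0 ^ 3} := by
    apply aux_sq_mem
    rwa [hJ] at hp2
  have hqm : q ∈ Ideal.span {(X 0 : MvPolynomial (Fin 2) K), X 1} :=
    aux_mem_span_X q hq0
  have hfin : p * (q * q) ∈ J := by
    rw [hJ]; exact aux_prod_mem hpm hqm
  -- conclude
  have hzero : e (Ideal.Quotient.mk I ((X 1 : MvPolynomial (Fin 2) K) * (X 0 * X 0))) = 0 := by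
    have : Ideal.Quotient.mk J (p * (q * q)) = 0 :=
      (Ideal.Quotient.eq_zero_iff_mem).2 hfin
    rw [hmul, hmul, hp, hq] at this
    rw [map_mul, map_mul, map_mul, map_mul]
    exact this
  have hzero' : Ideal.Quotient.mk I ((X 1 : MvPolynomial (Fin 2) K) * (X 0 * X 0)) = 0 := by
    have := e.injective (by rw [hzero, map_zero] : e _ = e 0)
    exact this
  have hmemI : (X 1 : MvPolynomial (Fin 2) K) * (X 0 * X 0) ∈ I :=
    (Ideal.Quotient.eq_zero_iff_mem).1 hzero'
  have hX04 : (X 0 ^ 4 : MvPolynomial (Fin 2) K) ∈ I := by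
    have h1 : (X 0 ^ 4 - X 0 ^ 2 * X 1 : MvPolynomial (Fin 2) K) ∈ I := by
      rw [hI]
      exact Ideal.subset_span (Set.mem_insert_of_mem _ (Set.mem_insert _ _))
    have h2 : (X 0 ^ 2 * X 1 : MvPolynomial (Fin 2) K) ∈ I := by
      have : (X 0 ^ 2 * X 1 : MvPolynomial (Fin 2) K) = X 1 * (X 0 * X 0) := by ring
      rw [this]; exact hmemI
    have := add_mem h1 h2
    simpa using this
  rw [hI] at hX04
  exact aux_not_mem hX04
end
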